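/- arXiv:2307.15196 — 7 statements merged into one kernel-verified Lean document; each statement's English description precedes it below -/
import Mathlib

section
/- Let (μ_k)_{k≥0} with μ_k ≥ 0, (τ_k)_{k≥0} with τ_k ∈ [0,1), and (γ_k)_{k≥0} be real sequences, and let (ḡ_k)_{k≥0} be vectors in ℝ^d. Define the standard-formulation momentum iterates m̄_{k+1} = μ_k m̄_k + (1 − τ_k) ḡ_k and x̄_{k+1} = x̄_k − γ_k m̄_{k+1} from an initialization (x̄_0, m̄_0). Define α_0 = 1 and α_{k+1} = α_k/(α_k(1 − τ_k) + μ_k). Then for all k: 0 < α_{k+1} ≤ 1/(1 − τ_k); moreover, setting β_k = (α_{k+1}/α_k) μ_k and η_k = γ_k/α_{k+1}, the SGDM iterates m_{k+1} = β_k m_k + (1 − β_k) g_k, x_{k+1} = x_k − η_k m_{k+1} driven by the same gradient sequence g_k = ḡ_k with initialization m_0 = m̄_0, x_0 = x̄_0 satisfy x_k = x̄_k and m_k = α_k m̄_k for all k ≥ 0. -/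
/-- Equivalence of the standard momentum formulation
`m̄_{k+1} = μ_k m̄_k + (1 − τ_k) ḡ_k`, `x̄_{k+1} = x̄_k − γ_k m̄_{k+1}` and the SGDM
formulation `m_{k+1} = β_k m_k + (1 − β_k) g_k`, `x_{k+1} = x_k − η_k m_{k+1}` under the
reparameterization `α_0 = 1`, `α_{k+1} = α_k/(α_k(1−τ_k)+μ_k)`, `β_k = (α_{k+1}/α_k) μ_k`,
`η_k = γ_k/α_(k+1)`: one has `0 < α_{k+1} ≤ 1/(1−τ_k)`, `x_k = x̄_k` and `m_k = α_k m̄_k`. -/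
theorem stmt_3 {d : ℕ}
    (μ τ γ : ℕ → ℝ) (hμ : ∀ k, 0 ≤ μ k) (hτ : ∀ k, τ k ∈ Set.Ico (0 : ℝ) 1)
    (gbar : ℕ → EuclideanSpace ℝ (Fin d))
    (xbar mbar : ℕ → EuclideanSpace ℝ (Fin d))
    (hmbar : ∀ k, mbar (k + 1) = μ k • mbar k + (1 - τ k) • gbar k)
    (hxbar : ∀ k, xbar (k + 1) = xbar k - γ k • mbar (k + 1))
    (α : ℕ → ℝ) (hα0 : α 0 = 1)
    (hαrec : ∀ k, α (k + 1) = α k / (α k * (1 - τ k) + μ k))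
    (β η : ℕ → ℝ)
    (hβ : ∀ k, β k = (α (k + 1) / α k) * μ k)
    (hη : ∀ k, η k = γ k / α (k + 1))
    (x m : ℕ → EuclideanSpace ℝ (Fin d))
    (hm0 : m 0 = mbar 0) (hx0 : x 0 = xbar 0)
    (hm : ∀ k, m (k + 1) = β k • m k + (1 - β k) • gbar k)
    (hx : ∀ k, x (k + 1) = x k - η k • m (k + 1)) :
    ∀ k, (0 < α (k + 1) ∧ α (k + 1) ≤ 1 / (1 - τ k))
      ∧ x k = xbar k ∧ m k = α k • mbar k := by
  have hτ1 : ∀ k, 0 < 1 - τ k := fun k => by have := (hτ k).2; linarith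
  -- positivity of α
  have hpos : ∀ k, 0 < α k := by
    intro k
    induction k with
    | zero => rw [hα0]; norm_num
    | succ k ih =>
      rw [hαrec k]
      have := hτ1 k; have := hμ k; exact div_pos ih (by nlinarith)
  -- denominator positive
  have hden : ∀ k, 0 < α k * (1 - τ k) + μ k := fun k => by
    have := hpos k; have := hτ1 k; have := hμ k; positivity
  -- key algebraic identity: α(k+1) * (α k * (1-τ k) + μ k) = α k
  have hkey : ∀ k, α (k + 1) * (α k * (1 - τ k) + μ k) = α k := fun k => by
    rw [hαrec k, div_mul_cancel₀ _ (hden k).ne']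
  -- bound
  have hbnd : ∀ k, α (k + 1) ≤ 1 / (1 - τ k) := by
    intro k
    rw [hαrec k, div_le_div_iff₀ (hden k) (hτ1 k)]
    have := hpos k; have := hμ k
    nlinarith
  -- main induction
  have main : ∀ k, x k = xbar k ∧ m k = α k • mbar k := by
    intro k
    induction k with
    | zero => exact ⟨hx0, by rw [hm0, hα0, one_smul]⟩
    | succ k ih =>
      obtain ⟨hxk, hmk⟩ := ih
      have hαk := hpos k
      have hαk1 := hpos (k + 1)
      have hβk : β k = α (k + 1) * μ k / α k := by rw [hβ k]; ring
      have h1β : 1 - β k = α (k + 1) * (1 - τ k) := by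
        rw [hβk]
        have := hkey k
        field_simp
        nlinarith [this]
      have hm1 : m (k + 1) = α (k + 1) • mbar (k + 1) := by
        rw [hm k, hmk, hmbar k, h1β, hβk, smul_add, smul_smul, smul_smul, smul_smul]
        congr 2
        field_simp
      refine ⟨?_, hm1⟩
      rw [hx k, hxk, hxbar k, hm1, hη k, smul_smul]
      congr 2
      field_simp
  exact fun k => ⟨⟨hpos (k + 1), hbnd k⟩, main k⟩
end

section
/- Let (η_k, β_k)_{k≥0} be a hyperparameter schedule scaled by η ∈ (0,1] with index α ≥ 0, with constants η_max, λ_min, λ_max. Then for every k the series η̄_k = (1 − β_k)·Σ_{s=k}^∞ η_s ∏_{τ=k+1}^{s} β_τ converges, and η̄_k ≤ (λ_max η_max/λ_min)·η and η̄_k β_k/(1 − β_k) ≤ (λ_max η_max/λ_min²)·η^{1−α}. Moreover, if η_k = η and β_k = β ∈ (0,1) for all k, then η̄_k = η for all k. -/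
/-- For a hyperparameter schedule `(η_k, β_k)` scaled by `η ∈ (0,1]` with index `α ≥ 0`
(constants `η_max`, `λ_min`, `λ_max`), the averaged learning rate
`η̄_k = (1 − β_k)·Σ_{s=k}^∞ η_s ∏_{τ=k+1}^{s} β_τ` is a convergent series and satisfies
`η̄_k ≤ (λ_max η_max/λ_min)·η` and `η̄_k β_k/(1 − β_k) ≤ (λ_max η_max/λ_min²)·η^{1−α}`;
moreover for the constant schedule `η_k = η`, `β_k = β` one has `η̄_k = η`. -/
theorem stmt_5 (η α ηmax lmin lmax : ℝ)
    (hη : 0 < η) (hη1 : η ≤ 1) (hα : 0 ≤ α)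
    (hηmax : 0 < ηmax) (hlmin : 0 < lmin) (hl : lmin ≤ lmax) (hlmax : lmax < 1)
    (ηk βk : ℕ → ℝ)
    (hηk : ∀ k, 0 ≤ ηk k ∧ ηk k ≤ ηmax * η)
    (hβk : ∀ k, βk k ∈ Set.Ioo (0 : ℝ) 1
      ∧ lmin * η ^ α ≤ 1 - βk k ∧ 1 - βk k ≤ lmax * η ^ α)
    (etaBar : ℕ → ℝ)
    (hetaBar : ∀ k, etaBar k
      = (1 - βk k) * ∑' j : ℕ, ηk (k + j) * ∏ t ∈ Finset.Ico (k + 1) (k + j + 1), βk t) :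
    (∀ k, Summable (fun j : ℕ => ηk (k + j) * ∏ t ∈ Finset.Ico (k + 1) (k + j + 1), βk t))
    ∧ (∀ k, etaBar k ≤ (lmax * ηmax / lmin) * η)
    ∧ (∀ k, etaBar k * βk k / (1 - βk k) ≤ (lmax * ηmax / lmin ^ 2) * η ^ (1 - α))
    ∧ ((∀ k, ηk k = η) → (∀ k, βk k = βk 0) → ∀ k, etaBar k = η) := by
  have hP : 0 < η ^ α := Real.rpow_pos_of_pos hη α
  set P := η ^ α with hPdef
  have hβpos : ∀ t, 0 < βk t := fun t => (hβk t).1.1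
  have hβlt : ∀ t, βk t < 1 := fun t => (hβk t).1.2
  have hr0 : 0 ≤ 1 - lmin * P := by have h := (hβk 0).2.1; nlinarith [hβpos 0]
  have hr1 : 1 - lmin * P < 1 := by nlinarith
  have hβle : ∀ t, βk t ≤ 1 - lmin * P := fun t => by have := (hβk t).2.1; linarith
  set r := 1 - lmin * P with hrdef
  have hprodnn : ∀ k j, (0:ℝ) ≤ ∏ t ∈ Finset.Ico (k+1) (k+j+1), βk t :=
    fun k j => Finset.prod_nonneg (fun t _ => (hβpos t).le)
  have htermnn : ∀ k j, (0:ℝ) ≤ ηk (k + j) * ∏ t ∈ Finset.Ico (k+1) (k+j+1), βk t :=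
    fun k j => mul_nonneg (hηk (k+j)).1 (hprodnn k j)
  have hbound : ∀ k j, ηk (k + j) * ∏ t ∈ Finset.Ico (k+1) (k+j+1), βk t
      ≤ (ηmax * η) * r ^ j := by
    intro k j
    have hprod : ∏ t ∈ Finset.Ico (k+1) (k+j+1), βk t ≤ r ^ j := by
      calc ∏ t ∈ Finset.Ico (k+1) (k+j+1), βk t
          ≤ ∏ _t ∈ Finset.Ico (k+1) (k+j+1), r :=
            Finset.prod_le_prod (fun t _ => (hβpos t).le) (fun t _ => hβle t)
        _ = r ^ j := by rw [Finset.prod_const, Nat.card_Ico]; congr 1; omega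
    exact mul_le_mul (hηk (k+j)).2 hprod (hprodnn k j) (by positivity)
  have hgeo : Summable (fun j : ℕ => (ηmax * η) * r ^ j) :=
    (summable_geometric_of_lt_one hr0 hr1).mul_left _
  have hsum : ∀ k, Summable (fun j : ℕ => ηk (k + j) * ∏ t ∈ Finset.Ico (k+1) (k+j+1), βk t) :=
    fun k => Summable.of_nonneg_of_le (htermnn k) (hbound k) hgeo
  have h1r : 1 - r = lmin * P := by rw [hrdef]; ring
  have hSle : ∀ k, (∑' j : ℕ, ηk (k + j) * ∏ t ∈ Finset.Ico (k+1) (k+j+1), βk t)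
      ≤ ηmax * η / (lmin * P) := by
    intro k
    have h := Summable.tsum_le_tsum (hbound k) (hsum k) hgeo
    rwa [tsum_mul_left, tsum_geometric_of_lt_one hr0 hr1, h1r, ← div_eq_mul_inv] at h
  have hSnn : ∀ k, 0 ≤ ∑' j : ℕ, ηk (k + j) * ∏ t ∈ Finset.Ico (k+1) (k+j+1), βk t :=
    fun k => tsum_nonneg (htermnn k)
  refine ⟨hsum, ?_, ?_, ?_⟩
  · intro k
    rw [hetaBar k]
    have h1 : 1 - βk k ≤ lmax * P := (hβk k).2.2
    have h0 : 0 ≤ 1 - βk k := by linarith [hβlt k]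
    calc (1 - βk k) * ∑' j : ℕ, ηk (k + j) * ∏ t ∈ Finset.Ico (k+1) (k+j+1), βk t
        ≤ (lmax * P) * (ηmax * η / (lmin * P)) :=
          mul_le_mul h1 (hSle k) (hSnn k) (mul_nonneg (hlmin.trans_le hl).le hP.le)
      _ = (lmax * ηmax / lmin) * η := by field_simp
  · intro k
    rw [hetaBar k]
    have hc : (0:ℝ) < 1 - βk k := by linarith [hβlt k]
    have heq : (1 - βk k) * (∑' j : ℕ, ηk (k + j) * ∏ t ∈ Finset.Ico (k+1) (k+j+1), βk t)
        * βk k / (1 - βk k)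
        = (∑' j : ℕ, ηk (k + j) * ∏ t ∈ Finset.Ico (k+1) (k+j+1), βk t) * βk k := by
      field_simp
    rw [heq]
    have hstep : (∑' j : ℕ, ηk (k + j) * ∏ t ∈ Finset.Ico (k+1) (k+j+1), βk t) * βk k
        ≤ ηmax * η / (lmin * P) := by
      calc _ ≤ (ηmax * η / (lmin * P)) * 1 :=
            mul_le_mul (hSle k) (hβlt k).le (hβpos k).le (by positivity)
        _ = ηmax * η / (lmin * P) := mul_one _
    refine hstep.trans ?_
    have hrw : η ^ (1 - α) = η / P := by
      rw [hPdef, Real.rpow_sub hη, Real.rpow_one]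
    rw [hrw]
    rw [div_le_iff₀ (by positivity : (0:ℝ) < lmin * P)]
    have hexp : lmax * ηmax / lmin ^ 2 * (η / P) * (lmin * P) = (lmax / lmin) * (ηmax * η) := by
      field_simp
    rw [hexp]
    have hge1 : (1:ℝ) ≤ lmax / lmin := (one_le_div hlmin).2 hl
    nlinarith [mul_nonneg (sub_nonneg.2 hge1) (mul_nonneg hηmax.le hη.le)]
  · intro hηc hβc k
    rw [hetaBar k, hβc k]
    have hterm : ∀ j : ℕ, ηk (k + j) * ∏ t ∈ Finset.Ico (k+1) (k+j+1), βk t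
        = η * βk 0 ^ j := by
      intro j
      rw [hηc (k+j)]
      congr 1
      rw [Finset.prod_congr rfl (fun t _ => hβc t), Finset.prod_const, Nat.card_Ico]
      congr 1; omega
    rw [tsum_congr hterm, tsum_mul_left,
      tsum_geometric_of_lt_one (hβpos 0).le (hβlt 0)]
    have : (1:ℝ) - βk 0 ≠ 0 := by have := hβlt 0; linarith
    field_simp
end

section
/- Let (β_k)_{k≥0} with β_k ∈ (0,1) and sup_k β_k < 1, let (η_k)_{k≥0} be a nonnegative bounded sequence, let (g_k)_{k≥0} be vectors in ℝ^d, and let (x_k, m_k) be the SGDM iterates m_{k+1} = β_k m_k + (1 − β_k) g_k, x_{k+1} = x_k − η_k m_{k+1} from (x_0, m_0). Then the coupled trajectory y_k = x_k − (η̄_k β_k/(1 − β_k)) m_k satisfies y_k = y_{k−1} − η̄_{k−1} g_{k−1} for every k ≥ 1; equivalently, y_k = x_0 − (η̄_0 β_0/(1 − β_0)) m_0 − Σ_{s=0}^{k−1} η̄_s g_s. -/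
/-- For SGDM iterates `m_{k+1} = β_k m_k + (1 − β_k) g_k`, `x_{k+1} = x_k − η_k m_{k+1}`
with `β_k ∈ (0,1)`, `sup_k β_k < 1` and `(η_k)` nonnegative and bounded, the coupled
trajectory `y_k = x_k − (η̄_k β_k/(1 − β_k)) m_k` (with the averaged learning rate
`η̄_k = (1 − β_k)·Σ_{s=k}^∞ η_s ∏_{τ=k+1}^{s} β_τ`) satisfies the plain SGD recursion
`y_{k+1} = y_k − η̄_k g_k`, equivalently
`y_k = x_0 − (η̄_0 β_0/(1 − β_0)) m_0 − Σ_{s=0}^{k−1} η̄_s g_s`. -/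
theorem stmt_6 {d : ℕ}
    (βk ηk : ℕ → ℝ)
    (hβ : ∀ k, βk k ∈ Set.Ioo (0 : ℝ) 1) (hβsup : ∃ B < (1 : ℝ), ∀ k, βk k ≤ B)
    (hηk : ∀ k, 0 ≤ ηk k) (hηbdd : ∃ M : ℝ, ∀ k, ηk k ≤ M)
    (g x m : ℕ → EuclideanSpace ℝ (Fin d))
    (hm : ∀ k, m (k + 1) = βk k • m k + (1 - βk k) • g k)
    (hx : ∀ k, x (k + 1) = x k - ηk k • m (k + 1))
    (etaBar : ℕ → ℝ)
    (hetaBar : ∀ k, etaBar k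
      = (1 - βk k) * ∑' j : ℕ, ηk (k + j) * ∏ t ∈ Finset.Ico (k + 1) (k + j + 1), βk t)
    (y : ℕ → EuclideanSpace ℝ (Fin d))
    (hy : ∀ k, y k = x k - (etaBar k * βk k / (1 - βk k)) • m k) :
    (∀ k, y (k + 1) = y k - etaBar k • g k)
    ∧ (∀ k, y k = x 0 - (etaBar 0 * βk 0 / (1 - βk 0)) • m 0
        - ∑ s ∈ Finset.range k, etaBar s • g s) := by

  obtain ⟨B, hB1, hBb⟩ := hβsup
  obtain ⟨M, hM⟩ := hηbdd
  have hB0 : (0:ℝ) ≤ B := le_trans (hβ 0).1.le (hBb 0)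
  have hM0 : (0:ℝ) ≤ M := le_trans (hηk 0) (hM 0)
  set S : ℕ → ℝ := fun k => ∑' j : ℕ, ηk (k + j) * ∏ t ∈ Finset.Ico (k + 1) (k + j + 1), βk t
    with hSdef
  have hne : ∀ k, (1 : ℝ) - βk k ≠ 0 := fun k => sub_ne_zero.mpr (hβ k).2.ne'
  have hsum : ∀ k, Summable (fun j : ℕ =>
      ηk (k + j) * ∏ t ∈ Finset.Ico (k + 1) (k + j + 1), βk t) := by
    intro k
    refine Summable.of_nonneg_of_le ?_ ?_ ((summable_geometric_of_lt_one hB0 hB1).mul_left M)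
    · intro j
      exact mul_nonneg (hηk _) (Finset.prod_nonneg fun t _ => (hβ t).1.le)
    · intro j
      have hprod : ∏ t ∈ Finset.Ico (k + 1) (k + j + 1), βk t ≤ B ^ j := by
        calc ∏ t ∈ Finset.Ico (k + 1) (k + j + 1), βk t
            ≤ ∏ t ∈ Finset.Ico (k + 1) (k + j + 1), B :=
              Finset.prod_le_prod (fun t _ => (hβ t).1.le) (fun t _ => hBb t)
          _ = B ^ j := by rw [Finset.prod_const, Nat.card_Ico]; congr 1; omega
      exact mul_le_mul (hM _) hprod
        (Finset.prod_nonneg fun t _ => (hβ t).1.le) hM0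
  have hSe : ∀ k, etaBar k = (1 - βk k) * S k := fun k => hetaBar k
  have hSrec : ∀ k, S k = ηk k + βk (k + 1) * S (k + 1) := by
    intro k
    have h1 : ∀ j : ℕ, ηk (k + (j + 1)) * ∏ t ∈ Finset.Ico (k + 1) (k + (j + 1) + 1), βk t
        = βk (k + 1) * (ηk (k + 1 + j) * ∏ t ∈ Finset.Ico (k + 1 + 1) (k + 1 + j + 1), βk t) := by
      intro j
      rw [Finset.prod_eq_prod_Ico_succ_bot (by omega : k + 1 < k + (j + 1) + 1)]
      have e1 : k + (j + 1) = k + 1 + j := by omega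
      rw [e1]
      ring
    have h0 := Summable.tsum_eq_zero_add (hsum k)
    rw [tsum_congr h1, tsum_mul_left] at h0
    show (∑' j : ℕ, ηk (k + j) * ∏ t ∈ Finset.Ico (k + 1) (k + j + 1), βk t)
      = ηk k + βk (k + 1) *
        ∑' j : ℕ, ηk (k + 1 + j) * ∏ t ∈ Finset.Ico (k + 1 + 1) (k + 1 + j + 1), βk t
    rw [h0]
    simp
  have hc : ∀ k, etaBar k * βk k / (1 - βk k) = βk k * S k := by
    intro k
    rw [hSe k]
    field_simp [hne k]
  have h1 : ∀ k, y (k + 1) = y k - etaBar k • g k := by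
    intro k
    rw [hy, hy, hx, hm, hc, hc, hSe k, hSrec k]
    module
  refine ⟨h1, ?_⟩
  intro k
  induction k with
  | zero => simp [hy 0]
  | succ n ih =>
      rw [Finset.sum_range_succ, h1 n, ih]
      abel
end

section
/- In the warm-up setting, for every k ≥ 0: E[x_k] = x_0 − kηc and Cov(x_k) = (kη²σ² − 2βη²σ²(1−β^k)/(1−β²)) I_d. In particular, since the plain SGD iterate z_k = x_0 − η Σ_{s=0}^{k−1} g_s has mean x_0 − kηc and covariance kη²σ² I_d, the difference Cov(z_k) − Cov(x_k) equals (2βη²σ²(1−β^k)/(1−β²)) I_d, whose operator norm is at most 2η²σ²/(1−β²) uniformly in k. -/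
open MeasureTheory ProbabilityTheory

lemma coord_abs_le_norm {d : ℕ} (v : EuclideanSpace ℝ (Fin d)) (i : Fin d) : |v i| ≤ ‖v‖ := by
  rw [EuclideanSpace.norm_eq]
  have h : |v i| = Real.sqrt (|v i| ^ 2) := by
    rw [Real.sqrt_sq (abs_nonneg _)]
  rw [h]
  apply Real.sqrt_le_sqrt
  have := Finset.single_le_sum (f := fun j => ‖v j‖ ^ 2) (fun j _ => by positivity)
    (Finset.mem_univ i)
  simpa [Real.norm_eq_abs] using this

lemma gen_cov {Ω : Type} [MeasurableSpace Ω] {P : Measure Ω}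
    (F G : ℕ → Ω → ℝ) (w v : ℕ → ℝ) (n : ℕ)
    (hFi : ∀ s, Integrable (F s) P) (hGi : ∀ s, Integrable (G s) P)
    (hFG : ∀ s, Integrable (fun ω => F s ω * G s ω) P)
    (hF0 : ∀ s, ∫ ω, F s ω ∂P = 0)
    (hind : ∀ s t, s ≠ t → IndepFun (F s) (G t) P) :
    ∫ ω, (∑ s ∈ Finset.range n, w s * F s ω) * (∑ t ∈ Finset.range n, v t * G t ω) ∂P
      = ∑ s ∈ Finset.range n, w s * v s * ∫ ω, F s ω * G s ω ∂P := by
  have key : ∀ s t : ℕ, Integrable (fun ω => F s ω * G t ω) P := by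
    intro s t
    rcases eq_or_ne s t with rfl | h
    · exact hFG s
    · exact (hind s t h).integrable_mul (hFi s) (hGi t)
  have hzero : ∀ s t : ℕ, s ≠ t → ∫ ω, F s ω * G t ω ∂P = 0 := by
    intro s t h
    have := (hind s t h).integral_fun_mul_eq_mul_integral (hFi s).1 (hGi t).1
    simpa [Pi.mul_def, hF0 s] using this
  calc ∫ ω, (∑ s ∈ Finset.range n, w s * F s ω) * (∑ t ∈ Finset.range n, v t * G t ω) ∂P
      = ∫ ω, ∑ s ∈ Finset.range n, ∑ t ∈ Finset.range n,
          (w s * v t) * (F s ω * G t ω) ∂P := by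
        congr 1; funext ω
        rw [Finset.sum_mul_sum]
        apply Finset.sum_congr rfl; intro s _
        apply Finset.sum_congr rfl; intro t _
        ring
    _ = ∑ s ∈ Finset.range n, ∑ t ∈ Finset.range n,
          (w s * v t) * ∫ ω, F s ω * G t ω ∂P := by
        rw [integral_finset_sum]
        · apply Finset.sum_congr rfl; intro s _
          rw [integral_finset_sum]
          · apply Finset.sum_congr rfl; intro t _
            exact integral_const_mul _ _
          · intro t _; exact (key s t).const_mul _
        · intro s _
          exact integrable_finset_sum _ (fun t _ => (key s t).const_mul _)
    _ = ∑ s ∈ Finset.range n, w s * v s * ∫ ω, F s ω * G s ω ∂P := by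
        apply Finset.sum_congr rfl; intro s hs
        rw [Finset.sum_eq_single s]
        · intro t _ hts; rw [hzero s t (Ne.symm hts), mul_zero]
        · intro h; exact absurd hs h

lemma gen_mean {d : ℕ} {Ω : Type} [MeasurableSpace Ω] {P : Measure Ω} [IsProbabilityMeasure P]
    (η : ℝ) (x0 c : EuclideanSpace ℝ (Fin d)) (ξ : ℕ → Ω → EuclideanSpace ℝ (Fin d))
    (hint : ∀ n, Integrable (ξ n) P) (hmean : ∀ n, ∫ ω, ξ n ω ∂P = c)
    (w : ℕ → ℝ) (n : ℕ) :
    ∫ ω, (x0 - η • ∑ s ∈ Finset.range n, w s • ξ s ω) ∂P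
      = x0 - (η * ∑ s ∈ Finset.range n, w s) • c := by
  have hI : Integrable (fun ω => ∑ s ∈ Finset.range n, w s • ξ s ω) P :=
    integrable_finset_sum _ (fun s _ => (hint s).smul (w s))
  have hsub := integral_sub (μ := P) (f := fun _ : Ω => x0)
    (g := fun ω => η • ∑ s ∈ Finset.range n, w s • ξ s ω) (integrable_const x0) (hI.smul η)
  rw [hsub, integral_const]
  simp only [probReal_univ, one_smul]
  rw [integral_smul, integral_finset_sum (f := fun s ω => w s • ξ s ω) _ (fun s _ => (hint s).smul (w s))]
  congr 1
  have : ∀ s ∈ Finset.range n, ∫ ω, w s • ξ s ω ∂P = w s • c := by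
    intro s _; rw [integral_smul, hmean]
  rw [Finset.sum_congr rfl this, ← Finset.sum_smul, smul_smul]

noncomputable def aCoef (β : ℝ) (k s : ℕ) : ℝ :=
  if s = 0 then β * (1 - β ^ k) / (1 - β) else if s ≤ k then 1 - β ^ (k + 1 - s) else 0

lemma aCoef_zero (β : ℝ) (k : ℕ) : aCoef β k 0 = β * (1 - β ^ k) / (1 - β) := by
  simp [aCoef]

lemma aCoef_succ (β : ℝ) (k s : ℕ) (h : s < k) : aCoef β k (s + 1) = 1 - β ^ (k - s) := by
  simp only [aCoef, Nat.succ_ne_zero, if_false, if_pos (by omega : s + 1 ≤ k)]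
  congr 2
  omega

lemma aCoef_rec0 (β : ℝ) (hβ : β ≠ 1) (k : ℕ) :
    aCoef β (k + 1) 0 = aCoef β k 0 + β ^ (k + 1) := by
  have h1 : (1 : ℝ) - β ≠ 0 := by intro h; apply hβ; linarith [sub_eq_zero.mp h]
  simp only [aCoef_zero]
  field_simp
  ring

lemma aCoef_recS (β : ℝ) (k s : ℕ) (h : s ≤ k) :
    aCoef β (k + 1) (s + 1) = aCoef β k (s + 1) + (1 - β) * β ^ (k - s) := by
  rcases lt_or_eq_of_le h with h' | rfl
  · rw [aCoef_succ β (k+1) s (by omega), aCoef_succ β k s h']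
    have : k + 1 - s = (k - s) + 1 := by omega
    rw [this, pow_succ]
    ring
  · rw [aCoef_succ β (s+1) s (by omega)]
    simp only [aCoef, Nat.succ_ne_zero, if_false, if_neg (by omega : ¬ s + 1 ≤ s)]
    simp

lemma aCoef_top (β : ℝ) (k : ℕ) : aCoef β k (k + 1) = 0 := by
  simp [aCoef]

section repr
variable {d : ℕ} {Ω : Type} (β η : ℝ) (x0 : EuclideanSpace ℝ (Fin d))
  (ξ m x : ℕ → Ω → EuclideanSpace ℝ (Fin d))

lemma m_repr (hm0 : ∀ ω, m 0 ω = ξ 0 ω)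
    (hmrec : ∀ k ω, m (k + 1) ω = β • m k ω + (1 - β) • ξ (k + 1) ω) :
    ∀ k ω, m k ω = β ^ k • ξ 0 ω
      + ∑ s ∈ Finset.range k, ((1 - β) * β ^ (k - 1 - s)) • ξ (s + 1) ω := by
  intro k
  induction k with
  | zero => intro ω; simp [hm0]
  | succ k ih =>
    intro ω
    rw [hmrec, ih, Finset.sum_range_succ]
    rw [smul_add, Finset.smul_sum]
    have h1 : ∀ s ∈ Finset.range k,
        β • (((1 - β) * β ^ (k - 1 - s)) • ξ (s + 1) ω)
          = ((1 - β) * β ^ (k + 1 - 1 - s)) • ξ (s + 1) ω := by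
      intro s hs
      rw [Finset.mem_range] at hs
      rw [smul_smul]
      congr 1
      have : k + 1 - 1 - s = (k - 1 - s) + 1 := by omega
      rw [this, pow_succ]
      ring
    rw [Finset.sum_congr rfl h1]
    have h2 : k + 1 - 1 - k = 0 := by omega
    rw [h2, smul_smul, ← pow_succ']
    simp only [pow_zero, mul_one]
    abel

lemma x_repr (hβ : β ≠ 1)
    (hm0 : ∀ ω, m 0 ω = ξ 0 ω)
    (hmrec : ∀ k ω, m (k + 1) ω = β • m k ω + (1 - β) • ξ (k + 1) ω)
    (hx0 : ∀ ω, x 0 ω = x0)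
    (hxrec : ∀ k ω, x (k + 1) ω = x k ω - η • m (k + 1) ω) :
    ∀ k ω, x k ω = x0 - η • ∑ s ∈ Finset.range (k + 1), aCoef β k s • ξ s ω := by
  intro k
  induction k with
  | zero =>
    intro ω
    simp [hx0, aCoef]
  | succ k ih =>
    intro ω
    rw [hxrec, ih, m_repr β ξ m hm0 hmrec (k + 1)]
    have key : (∑ s ∈ Finset.range (k + 2), aCoef β (k + 1) s • ξ s ω)
        = (∑ s ∈ Finset.range (k + 1), aCoef β k s • ξ s ω)
          + (β ^ (k + 1) • ξ 0 ω
            + ∑ s ∈ Finset.range (k + 1), ((1 - β) * β ^ (k + 1 - 1 - s)) • ξ (s + 1) ω) := by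
      rw [Finset.sum_range_succ' (fun s => aCoef β (k + 1) s • ξ s ω) (k + 1),
        Finset.sum_range_succ' (fun s => aCoef β k s • ξ s ω) k]
      have hk : ∑ s ∈ Finset.range k, aCoef β k (s + 1) • ξ (s + 1) ω
          = ∑ s ∈ Finset.range (k + 1), aCoef β k (s + 1) • ξ (s + 1) ω := by
        rw [Finset.sum_range_succ, aCoef_top, zero_smul, add_zero]
      rw [hk]
      have hterm : ∀ s ∈ Finset.range (k + 1),
          aCoef β (k + 1) (s + 1) • ξ (s + 1) ω
            = aCoef β k (s + 1) • ξ (s + 1) ω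
              + ((1 - β) * β ^ (k + 1 - 1 - s)) • ξ (s + 1) ω := by
        intro s hs
        rw [Finset.mem_range] at hs
        rw [← add_smul]
        congr 1
        have h2 : k + 1 - 1 - s = k - s := by omega
        rw [h2, aCoef_recS β k s (by omega)]
      rw [Finset.sum_congr rfl hterm, Finset.sum_add_distrib, aCoef_rec0 β hβ k, add_smul]
      abel
    rw [key]
    module
end repr

lemma aCoef_sum (β : ℝ) (hβ : β ≠ 1) (k : ℕ) :
    ∑ s ∈ Finset.range (k + 1), aCoef β k s = (k : ℝ) := by
  have h1 : (1 : ℝ) - β ≠ 0 := fun h => hβ (by linarith [sub_eq_zero.mp h])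
  have h1' : β - 1 ≠ 0 := fun h => hβ (by linarith [sub_eq_zero.mp h])
  rw [Finset.sum_range_succ' (aCoef β k) k, aCoef_zero]
  have h2 : ∀ s ∈ Finset.range k, aCoef β k (s + 1) = 1 - β ^ (k - s) := by
    intro s hs; exact aCoef_succ β k s (Finset.mem_range.mp hs)
  rw [Finset.sum_congr rfl h2, Finset.sum_sub_distrib, Finset.sum_const, Finset.card_range]
  have hrefl : ∑ s ∈ Finset.range k, β ^ (k - s) = ∑ j ∈ Finset.range k, β ^ (j + 1) := by
    rw [← Finset.sum_range_reflect (fun j => β ^ (j + 1)) k]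
    apply Finset.sum_congr rfl; intro s hs
    rw [Finset.mem_range] at hs
    congr 1; omega
  have hgeom : ∑ j ∈ Finset.range k, β ^ (j + 1) = β * ((β ^ k - 1) / (β - 1)) := by
    have : ∀ j ∈ Finset.range k, β ^ (j + 1) = β * β ^ j := by
      intro j _; rw [pow_succ]; ring
    rw [Finset.sum_congr rfl this, ← Finset.mul_sum, geom_sum_eq hβ]
  rw [hrefl, hgeom]
  field_simp
  ring

lemma aCoef_sq_sum (β σ : ℝ) (hβ0 : 0 < β) (hβ1 : β < 1) (k : ℕ) :
    ∑ s ∈ Finset.range (k + 1),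
        aCoef β k s * aCoef β k s * (if s = 0 then (1 - β) / (1 + β) * σ ^ 2 else σ ^ 2)
      = (k : ℝ) * σ ^ 2 - 2 * β * σ ^ 2 * (1 - β ^ k) / (1 - β ^ 2) := by
  have hβ : β ≠ 1 := ne_of_lt hβ1
  have h1 : (1 : ℝ) - β ≠ 0 := by intro h; exact hβ (by linarith [sub_eq_zero.mp h])
  have h1' : β - 1 ≠ 0 := sub_ne_zero.mpr hβ
  have h2 : (1 : ℝ) + β ≠ 0 := by positivity
  have hsq1 : β ^ 2 ≠ 1 := by nlinarith
  have hsq1' : β ^ 2 - 1 ≠ 0 := sub_ne_zero.mpr hsq1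
  have hsq1'' : (1 : ℝ) - β ^ 2 ≠ 0 := fun h => hsq1 (by linarith [sub_eq_zero.mp h])
  rw [Finset.sum_range_succ' (fun s => aCoef β k s * aCoef β k s *
    (if s = 0 then (1 - β) / (1 + β) * σ ^ 2 else σ ^ 2)) k]
  simp only [aCoef_zero, Nat.succ_ne_zero, if_false, if_pos rfl]
  have h3 : ∀ s ∈ Finset.range k,
      aCoef β k (s + 1) * aCoef β k (s + 1) * σ ^ 2
        = (1 - β ^ (k - s)) * (1 - β ^ (k - s)) * σ ^ 2 := by
    intro s hs; rw [aCoef_succ β k s (Finset.mem_range.mp hs)]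
  rw [Finset.sum_congr rfl h3]
  have hrefl : ∑ s ∈ Finset.range k, (1 - β ^ (k - s)) * (1 - β ^ (k - s)) * σ ^ 2
      = ∑ j ∈ Finset.range k, (1 - β ^ (j + 1)) * (1 - β ^ (j + 1)) * σ ^ 2 := by
    rw [← Finset.sum_range_reflect (fun j => (1 - β ^ (j + 1)) * (1 - β ^ (j + 1)) * σ ^ 2) k]
    apply Finset.sum_congr rfl; intro s hs
    rw [Finset.mem_range] at hs
    have : k - 1 - s + 1 = k - s := by omega
    rw [this]
  rw [hrefl]
  have hexp : ∀ j ∈ Finset.range k,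
      (1 - β ^ (j + 1)) * (1 - β ^ (j + 1)) * σ ^ 2
        = σ ^ 2 - (2 * σ ^ 2 * β) * β ^ j + (σ ^ 2 * β ^ 2) * (β ^ 2) ^ j := by
    intro j _
    have : (β ^ 2) ^ j = β ^ j * β ^ j := by
      rw [← pow_mul, two_mul, pow_add]
    rw [this, pow_succ]
    ring
  rw [Finset.sum_congr rfl hexp, Finset.sum_add_distrib, Finset.sum_sub_distrib,
    Finset.sum_const, Finset.card_range, ← Finset.mul_sum, ← Finset.mul_sum,
    geom_sum_eq hβ, geom_sum_eq hsq1]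
  have hpow : (β ^ 2) ^ k = β ^ k * β ^ k := by
    rw [← pow_mul, two_mul, pow_add]
  rw [hpow]
  simp only [↓reduceIte, nsmul_eq_mul]
  field_simp
  ring

lemma sum_coord {d : ℕ} {n : ℕ} (g : ℕ → EuclideanSpace ℝ (Fin d)) (i : Fin d) :
    (∑ s ∈ Finset.range n, g s) i = ∑ s ∈ Finset.range n, g s i :=
  map_sum (EuclideanSpace.proj (𝕜 := ℝ) i) g (Finset.range n)

section covE
variable {d : ℕ} {Ω : Type} [MeasurableSpace Ω] {P : Measure Ω} [IsProbabilityMeasure P]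
  (ξ : ℕ → Ω → EuclideanSpace ℝ (Fin d)) (c : EuclideanSpace ℝ (Fin d))

lemma coord_int (hint : ∀ n, Integrable (ξ n) P) (n : ℕ) (i : Fin d) :
    Integrable (fun ω => ξ n ω i) P :=
  (EuclideanSpace.proj (𝕜 := ℝ) i).integrable_comp (hint n)

lemma coord_mean (hint : ∀ n, Integrable (ξ n) P) (hmean : ∀ n, ∫ ω, ξ n ω ∂P = c)
    (n : ℕ) (i : Fin d) : ∫ ω, ξ n ω i ∂P = c i := by
  have h := (EuclideanSpace.proj (𝕜 := ℝ) i).integral_comp_comm (hint n)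
  rw [hmean n] at h
  exact h

lemma coord_cmeas (hmeas : ∀ n, Measurable (ξ n)) (n : ℕ) (i : Fin d) :
    Measurable (fun ω => ξ n ω i - c i) :=
  (((EuclideanSpace.proj (𝕜 := ℝ) i).continuous.measurable).comp (hmeas n)).sub
    measurable_const

lemma coord_cmean (hint : ∀ n, Integrable (ξ n) P) (hmean : ∀ n, ∫ ω, ξ n ω ∂P = c)
    (n : ℕ) (i : Fin d) : ∫ ω, (ξ n ω i - c i) ∂P = 0 := by
  rw [integral_sub (coord_int ξ hint n i) (integrable_const _), coord_mean ξ c hint hmean,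
    integral_const]
  simp

lemma coord_prod_int (hmeas : ∀ n, Measurable (ξ n))
    (hsq : ∀ n, Integrable (fun ω => ‖ξ n ω‖ ^ 2) P) (s : ℕ) (i j : Fin d) :
    Integrable (fun ω => (ξ s ω i - c i) * (ξ s ω j - c j)) P := by
  refine Integrable.mono' (g := fun ω => 2 * ‖ξ s ω‖ ^ 2 + ((c i) ^ 2 + (c j) ^ 2))
    (((hsq s).const_mul 2).add (integrable_const _))
    (((coord_cmeas ξ c hmeas s i).mul (coord_cmeas ξ c hmeas s j)).aestronglyMeasurable)
    (Filter.Eventually.of_forall fun ω => ?_)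
  have hi := coord_abs_le_norm (ξ s ω) i
  have hj := coord_abs_le_norm (ξ s ω) j
  have h1 : |ξ s ω i - c i| ≤ ‖ξ s ω‖ + |c i| := by
    have h := abs_add_le (ξ s ω i) (-(c i))
    rw [abs_neg, ← sub_eq_add_neg] at h
    exact h.trans (by linarith)
  have h2 : |ξ s ω j - c j| ≤ ‖ξ s ω‖ + |c j| := by
    have h := abs_add_le (ξ s ω j) (-(c j))
    rw [abs_neg, ← sub_eq_add_neg] at h
    exact h.trans (by linarith)
  rw [Real.norm_eq_abs, abs_mul]
  show |ξ s ω i - c i| * |ξ s ω j - c j| ≤ 2 * ‖ξ s ω‖ ^ 2 + (c i ^ 2 + c j ^ 2)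
  nlinarith [mul_le_mul h1 h2 (abs_nonneg _) (by positivity : (0:ℝ) ≤ ‖ξ s ω‖ + |c i|),
    sq_abs (c i), sq_abs (c j), sq_nonneg (‖ξ s ω‖ - |c i|), sq_nonneg (‖ξ s ω‖ - |c j|),
    sq_nonneg (|c i| - |c j|), abs_nonneg (ξ s ω i - c i), abs_nonneg (ξ s ω j - c j)]

lemma cov_entry (hmeas : ∀ n, Measurable (ξ n))
    (hindep : iIndepFun ξ P)
    (hsq : ∀ n, Integrable (fun ω => ‖ξ n ω‖ ^ 2) P)
    (hint : ∀ n, Integrable (ξ n) P)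
    (hmean : ∀ n, ∫ ω, ξ n ω ∂P = c)
    (w : ℕ → ℝ) (n : ℕ) (i j : Fin d) :
    ∫ ω, (∑ s ∈ Finset.range n, w s * (ξ s ω i - c i))
        * (∑ t ∈ Finset.range n, w t * (ξ t ω j - c j)) ∂P
      = ∑ s ∈ Finset.range n, w s * w s * ∫ ω, (ξ s ω i - c i) * (ξ s ω j - c j) ∂P := by
  exact gen_cov (fun s ω => ξ s ω i - c i) (fun t ω => ξ t ω j - c j) w w n
    (fun s => (coord_int ξ hint s i).sub (integrable_const _))
    (fun t => (coord_int ξ hint t j).sub (integrable_const _))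
    (fun s => coord_prod_int ξ c hmeas hsq s i j)
    (fun s => coord_cmean ξ c hint hmean s i)
    (fun s t h => (hindep.indepFun h).comp
      (((EuclideanSpace.proj (𝕜 := ℝ) i).continuous.measurable).sub measurable_const)
      (((EuclideanSpace.proj (𝕜 := ℝ) j).continuous.measurable).sub measurable_const))
end covE

/-- Warm-up example, trajectory endpoint distributions: for SGDM with i.i.d.-type
gradients of mean `c` and covariance `σ² I_d` (with `ξ 0 = m_0`, `ξ (k+1) = g_k`),
`E[x_k] = x_0 − kηc` and `Cov(x_k) = (kη²σ² − 2βη²σ²(1−β^k)/(1−β²)) I_d`;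
the plain SGD iterate `z_k = x_0 − η Σ_{s<k} g_s` has mean `x_0 − kηc` and covariance
`kη²σ² I_d`, so `Cov(z_k) − Cov(x_k) = (2βη²σ²(1−β^k)/(1−β²)) I_d`, a multiple of the
identity whose operator norm (the absolute value of the scalar) is at most
`2η²σ²/(1−β²)` uniformly in `k`. -/
theorem stmt_8 {d : ℕ} {Ω : Type} [MeasurableSpace Ω] (P : Measure Ω)
    [IsProbabilityMeasure P]
    (β η σ : ℝ) (hβ : β ∈ Set.Ioo (0 : ℝ) 1) (hη : 0 < η) (hσ : 0 < σ)
    (c x0 : EuclideanSpace ℝ (Fin d))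
    (ξ : ℕ → Ω → EuclideanSpace ℝ (Fin d))
    (hmeas : ∀ n, Measurable (ξ n))
    (hindep : iIndepFun ξ P)
    (hsq : ∀ n, Integrable (fun ω => ‖ξ n ω‖ ^ 2) P)
    (hint : ∀ n, Integrable (ξ n) P)
    (hmean : ∀ n, ∫ ω, ξ n ω ∂P = c)
    (hgcov : ∀ (k : ℕ) (i j : Fin d),
      ∫ ω, (ξ (k + 1) ω i - c i) * (ξ (k + 1) ω j - c j) ∂P
        = if i = j then σ ^ 2 else 0)
    (hm0cov : ∀ i j : Fin d,
      ∫ ω, (ξ 0 ω i - c i) * (ξ 0 ω j - c j) ∂P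
        = if i = j then ((1 - β) / (1 + β)) * σ ^ 2 else 0)
    (m x z : ℕ → Ω → EuclideanSpace ℝ (Fin d))
    (hm0 : ∀ ω, m 0 ω = ξ 0 ω)
    (hmrec : ∀ k ω, m (k + 1) ω = β • m k ω + (1 - β) • ξ (k + 1) ω)
    (hx0 : ∀ ω, x 0 ω = x0)
    (hxrec : ∀ k ω, x (k + 1) ω = x k ω - η • m (k + 1) ω)
    (hz : ∀ k ω, z k ω = x0 - η • ∑ s ∈ Finset.range k, ξ (s + 1) ω) :
    ∀ k : ℕ,
      (∫ ω, x k ω ∂P = x0 - ((k : ℝ) * η) • c)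
      ∧ (∀ i j : Fin d,
          ∫ ω, (x k ω i - (x0 i - (k : ℝ) * η * c i))
              * (x k ω j - (x0 j - (k : ℝ) * η * c j)) ∂P
            = if i = j then
                (k : ℝ) * η ^ 2 * σ ^ 2 - 2 * β * η ^ 2 * σ ^ 2 * (1 - β ^ k) / (1 - β ^ 2)
              else 0)
      ∧ (∫ ω, z k ω ∂P = x0 - ((k : ℝ) * η) • c)
      ∧ (∀ i j : Fin d,
          ∫ ω, (z k ω i - (x0 i - (k : ℝ) * η * c i))
              * (z k ω j - (x0 j - (k : ℝ) * η * c j)) ∂P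
            = if i = j then (k : ℝ) * η ^ 2 * σ ^ 2 else 0)
      ∧ (∀ i j : Fin d,
          (∫ ω, (z k ω i - (x0 i - (k : ℝ) * η * c i))
              * (z k ω j - (x0 j - (k : ℝ) * η * c j)) ∂P)
            - (∫ ω, (x k ω i - (x0 i - (k : ℝ) * η * c i))
              * (x k ω j - (x0 j - (k : ℝ) * η * c j)) ∂P)
            = if i = j then 2 * β * η ^ 2 * σ ^ 2 * (1 - β ^ k) / (1 - β ^ 2) else 0)
      ∧ |2 * β * η ^ 2 * σ ^ 2 * (1 - β ^ k) / (1 - β ^ 2)|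
          ≤ 2 * η ^ 2 * σ ^ 2 / (1 - β ^ 2) := by
  obtain ⟨hb0, hb1⟩ := hβ
  have hβne : β ≠ 1 := ne_of_lt hb1
  intro k
  -- representations
  have hxr := x_repr β η x0 ξ m x hβne hm0 hmrec hx0 hxrec k
  set b : ℕ → ℝ := fun s => if s = 0 then 0 else 1 with hbdef
  have hzr : ∀ ω, z k ω = x0 - η • ∑ s ∈ Finset.range (k + 1), b s • ξ s ω := by
    intro ω
    rw [hz k ω]
    congr 1
    rw [Finset.sum_range_succ' (fun s => b s • ξ s ω) k]
    simp [hbdef]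
  have hbsum : ∑ s ∈ Finset.range (k + 1), b s = (k : ℝ) := by
    rw [Finset.sum_range_succ' b k]
    simp [hbdef]
  -- centered-coordinate formulas
  have hxc : ∀ (ι : Fin d) ω, x k ω ι - (x0 ι - (k : ℝ) * η * c ι)
      = (-η) * ∑ s ∈ Finset.range (k + 1), aCoef β k s * (ξ s ω ι - c ι) := by
    intro ι ω
    rw [hxr ω, ← aCoef_sum β hβne k]
    simp only [PiLp.sub_apply, PiLp.smul_apply, sum_coord, smul_eq_mul, mul_sub]
    rw [Finset.sum_sub_distrib, ← Finset.sum_mul]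
    ring
  have hzc : ∀ (ι : Fin d) ω, z k ω ι - (x0 ι - (k : ℝ) * η * c ι)
      = (-η) * ∑ s ∈ Finset.range (k + 1), b s * (ξ s ω ι - c ι) := by
    intro ι ω
    rw [hzr ω, ← hbsum]
    simp only [PiLp.sub_apply, PiLp.smul_apply, sum_coord, smul_eq_mul, mul_sub]
    rw [Finset.sum_sub_distrib, ← Finset.sum_mul]
    ring
  -- generic covariance computation for a weight family
  have hcov : ∀ (w : ℕ → ℝ) (i j : Fin d),
      ∫ ω, ((-η) * ∑ s ∈ Finset.range (k + 1), w s * (ξ s ω i - c i))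
          * ((-η) * ∑ t ∈ Finset.range (k + 1), w t * (ξ t ω j - c j)) ∂P
        = η ^ 2 * ∑ s ∈ Finset.range (k + 1), w s * w s
            * (if i = j then (if s = 0 then (1 - β) / (1 + β) * σ ^ 2 else σ ^ 2) else 0) := by
    intro w i j
    have hpt : ∀ ω, ((-η) * ∑ s ∈ Finset.range (k + 1), w s * (ξ s ω i - c i))
          * ((-η) * ∑ t ∈ Finset.range (k + 1), w t * (ξ t ω j - c j))
        = η ^ 2 * ((∑ s ∈ Finset.range (k + 1), w s * (ξ s ω i - c i))
          * (∑ t ∈ Finset.range (k + 1), w t * (ξ t ω j - c j))) := by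
      intro ω; ring
    rw [integral_congr_ae (Filter.Eventually.of_forall hpt), integral_const_mul,
      cov_entry ξ c hmeas hindep hsq hint hmean w (k + 1) i j]
    congr 1
    apply Finset.sum_congr rfl
    intro s _
    congr 1
    rcases s with _ | s
    · rw [hm0cov i j]
      by_cases hij : i = j <;> simp [hij]
    · rw [hgcov s i j]
      by_cases hij : i = j <;> simp [hij]
  -- x mean
  have hxmean : ∫ ω, x k ω ∂P = x0 - ((k : ℝ) * η) • c := by
    simp only [hxr]
    rw [gen_mean η x0 c ξ hint hmean (aCoef β k) (k + 1), aCoef_sum β hβne k,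
      mul_comm η (k : ℝ)]
  -- z mean
  have hzmean : ∫ ω, z k ω ∂P = x0 - ((k : ℝ) * η) • c := by
    simp only [hzr]
    rw [gen_mean η x0 c ξ hint hmean b (k + 1), hbsum, mul_comm η (k : ℝ)]
  -- x covariance
  have hxcov : ∀ i j : Fin d,
      ∫ ω, (x k ω i - (x0 i - (k : ℝ) * η * c i))
          * (x k ω j - (x0 j - (k : ℝ) * η * c j)) ∂P
        = if i = j then
            (k : ℝ) * η ^ 2 * σ ^ 2 - 2 * β * η ^ 2 * σ ^ 2 * (1 - β ^ k) / (1 - β ^ 2)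
          else 0 := by
    intro i j
    simp only [hxc i, hxc j]
    rw [hcov (aCoef β k) i j]
    by_cases hij : i = j
    · simp only [hij, eq_self_iff_true, if_true]
      rw [aCoef_sq_sum β σ hb0 hb1 k]
      ring
    · simp only [hij, if_false]
      simp
  -- z covariance
  have hzcov : ∀ i j : Fin d,
      ∫ ω, (z k ω i - (x0 i - (k : ℝ) * η * c i))
          * (z k ω j - (x0 j - (k : ℝ) * η * c j)) ∂P
        = if i = j then (k : ℝ) * η ^ 2 * σ ^ 2 else 0 := by
    intro i j
    simp only [hzc i, hzc j]
    rw [hcov b i j]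
    by_cases hij : i = j
    · simp only [hij, eq_self_iff_true, if_true]
      have : ∑ s ∈ Finset.range (k + 1), b s * b s
          * (if s = 0 then (1 - β) / (1 + β) * σ ^ 2 else σ ^ 2) = (k : ℝ) * σ ^ 2 := by
        rw [Finset.sum_range_succ' (fun s => b s * b s
          * (if s = 0 then (1 - β) / (1 + β) * σ ^ 2 else σ ^ 2)) k]
        simp [hbdef, Finset.sum_const, Finset.card_range]
      rw [this]
      ring
    · simp only [hij, if_false]
      simp
  -- bound
  have hb2 : (0 : ℝ) < 1 - β ^ 2 := by nlinarith
  have hbound : |2 * β * η ^ 2 * σ ^ 2 * (1 - β ^ k) / (1 - β ^ 2)|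
      ≤ 2 * η ^ 2 * σ ^ 2 / (1 - β ^ 2) := by
    have hβk0 : (0 : ℝ) ≤ β ^ k := by positivity
    have hβk1 : β ^ k ≤ 1 := pow_le_one₀ (le_of_lt hb0) (le_of_lt hb1)
    have hnum0 : (0 : ℝ) ≤ 2 * β * η ^ 2 * σ ^ 2 * (1 - β ^ k) := by
      have : (0:ℝ) ≤ 1 - β ^ k := by linarith
      positivity
    have hNM : 2 * β * η ^ 2 * σ ^ 2 * (1 - β ^ k) ≤ 2 * η ^ 2 * σ ^ 2 := by
      have hE : (0:ℝ) < η ^ 2 * σ ^ 2 := by positivity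
      nlinarith [mul_nonneg (show (0:ℝ) ≤ 1 - β by linarith) hE.le,
        mul_nonneg (mul_nonneg hb0.le hβk0) hE.le]
    rw [abs_of_nonneg (div_nonneg hnum0 hb2.le)]
    gcongr
  refine ⟨hxmean, hxcov, hzmean, hzcov, ?_, hbound⟩
  intro i j
  rw [hxcov i j, hzcov i j]
  by_cases hij : i = j
  · simp only [hij, eq_self_iff_true, if_true]; ring
  · simp only [hij, if_false]; ring
end

section
/- In the warm-up setting, for every k ≥ 0 one has E‖m_{k+1}‖² = ‖c‖² + ((1−β)/(1+β)) σ² d, and hence the expected total length of the SGDM trajectory satisfies E[Σ_{k=0}^{K−1} ‖x_{k+1} − x_k‖] ≤ K η √(‖c‖² + ((1−β)/(1+β)) σ² d) for every K ≥ 1. -/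
open MeasureTheory ProbabilityTheory

private lemma euclid_norm_sq {d : ℕ} (x : EuclideanSpace ℝ (Fin d)) :
    ‖x‖ ^ 2 = ∑ i, x i ^ 2 := by
  rw [EuclideanSpace.norm_eq, Real.sq_sqrt (by positivity)]
  simp [sq_abs]

private lemma euclid_coord_sq_le {d : ℕ} (x : EuclideanSpace ℝ (Fin d)) (i : Fin d) :
    x i ^ 2 ≤ ‖x‖ ^ 2 := by
  rw [euclid_norm_sq]
  exact Finset.single_le_sum (fun j _ => sq_nonneg (x j)) (Finset.mem_univ i)

/-- Warm-up example, trajectory length of SGDM: with i.i.d.-type gradients of mean `c`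
and covariance `σ² I_d` (here `ξ 0 = m_0`, `ξ (k+1) = g_k`), one has
`E‖m_{k+1}‖² = ‖c‖² + ((1−β)/(1+β)) σ² d` for every `k ≥ 0`, and hence the expected
total length of the SGDM trajectory satisfies
`E[Σ_{k=0}^{K−1} ‖x_{k+1} − x_k‖] ≤ K η √(‖c‖² + ((1−β)/(1+β)) σ² d)` for every `K ≥ 1`. -/
theorem stmt_9 {d : ℕ} {Ω : Type} [MeasurableSpace Ω] (P : Measure Ω)
    [IsProbabilityMeasure P]
    (β η σ : ℝ) (hβ : β ∈ Set.Ioo (0 : ℝ) 1) (hη : 0 < η) (hσ : 0 < σ)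
    (c x0 : EuclideanSpace ℝ (Fin d))
    (ξ : ℕ → Ω → EuclideanSpace ℝ (Fin d))
    (hmeas : ∀ n, Measurable (ξ n))
    (hindep : iIndepFun ξ P)
    (hsq : ∀ n, Integrable (fun ω => ‖ξ n ω‖ ^ 2) P)
    (hint : ∀ n, Integrable (ξ n) P)
    (hmean : ∀ n, ∫ ω, ξ n ω ∂P = c)
    (hgcov : ∀ (k : ℕ) (i j : Fin d),
      ∫ ω, (ξ (k + 1) ω i - c i) * (ξ (k + 1) ω j - c j) ∂P
        = if i = j then σ ^ 2 else 0)
    (hm0cov : ∀ i j : Fin d,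
      ∫ ω, (ξ 0 ω i - c i) * (ξ 0 ω j - c j) ∂P
        = if i = j then ((1 - β) / (1 + β)) * σ ^ 2 else 0)
    (m x : ℕ → Ω → EuclideanSpace ℝ (Fin d))
    (hm0 : ∀ ω, m 0 ω = ξ 0 ω)
    (hmrec : ∀ k ω, m (k + 1) ω = β • m k ω + (1 - β) • ξ (k + 1) ω)
    (hx0 : ∀ ω, x 0 ω = x0)
    (hxrec : ∀ k ω, x (k + 1) ω = x k ω - η • m (k + 1) ω) :
    (∀ k : ℕ, ∫ ω, ‖m (k + 1) ω‖ ^ 2 ∂P = ‖c‖ ^ 2 + ((1 - β) / (1 + β)) * σ ^ 2 * d)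
    ∧ (∀ K : ℕ, 1 ≤ K →
        ∫ ω, (∑ k ∈ Finset.range K, ‖x (k + 1) ω - x k ω‖) ∂P
          ≤ (K : ℝ) * η * Real.sqrt (‖c‖ ^ 2 + ((1 - β) / (1 + β)) * σ ^ 2 * d)) := by
  obtain ⟨hβ0, hβ1⟩ := hβ
  have h1β : (0:ℝ) < 1 + β := by linarith
  set s : ℝ := (1 - β) / (1 + β) * σ ^ 2 with hsdef
  -- coordinate evaluation is measurable
  have heval : ∀ i : Fin d, Measurable (fun y : EuclideanSpace ℝ (Fin d) => y i) :=
    fun i => (EuclideanSpace.proj (𝕜 := ℝ) i).measurable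
  -- coordinates of integrable vector functions are integrable
  have coordInt_of : ∀ {f : Ω → EuclideanSpace ℝ (Fin d)}, Integrable f P →
      ∀ i : Fin d, Integrable (fun ω => f ω i) P := by
    intro f hf i
    simpa using (EuclideanSpace.proj (𝕜 := ℝ) i).integrable_comp hf
  have coordMean_of : ∀ {f : Ω → EuclideanSpace ℝ (Fin d)}, Integrable f P →
      ∀ i : Fin d, ∫ ω, f ω i ∂P = (∫ ω, f ω ∂P) i := by
    intro f hf i
    simpa using (EuclideanSpace.proj (𝕜 := ℝ) i).integral_comp_comm hf
  have coordMean : ∀ n (i : Fin d), ∫ ω, ξ n ω i ∂P = c i := by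
    intro n i; rw [coordMean_of (hint n) i, hmean n]
  -- coordinate squares are integrable
  have sqInt_of : ∀ {f : Ω → EuclideanSpace ℝ (Fin d)}, Measurable f →
      Integrable (fun ω => ‖f ω‖ ^ 2) P → ∀ i : Fin d, Integrable (fun ω => f ω i ^ 2) P := by
    intro f hf hf2 i
    refine hf2.mono ((((heval i).comp hf).pow_const 2).aestronglyMeasurable)
      (Filter.Eventually.of_forall fun ω => ?_)
    rw [Real.norm_eq_abs, Real.norm_eq_abs, abs_of_nonneg (sq_nonneg _),
      abs_of_nonneg (sq_nonneg _)]
    exact euclid_coord_sq_le (f ω) i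
  -- splitting the norm square integral across coordinates
  have normSqSplit : ∀ {f : Ω → EuclideanSpace ℝ (Fin d)}, Measurable f →
      Integrable (fun ω => ‖f ω‖ ^ 2) P →
      ∫ ω, ‖f ω‖ ^ 2 ∂P = ∑ i, ∫ ω, f ω i ^ 2 ∂P := by
    intro f hf hf2
    rw [← integral_finset_sum _ (fun i _ => sqInt_of hf hf2 i)]
    exact integral_congr_ae (Filter.Eventually.of_forall fun ω => euclid_norm_sq (f ω))
  -- from the covariance hypothesis to the second moment of a coordinate
  have xiSq : ∀ n (i : Fin d) (v : ℝ),
      (∫ ω, (ξ n ω i - c i) * (ξ n ω i - c i) ∂P = v) →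
      ∫ ω, ξ n ω i ^ 2 ∂P = v + c i ^ 2 := by
    intro n i v hv
    have hInt1 := coordInt_of (hint n) i
    have hInt2 := sqInt_of (hmeas n) (hsq n) i
    have hrw : ∫ ω, (ξ n ω i - c i) * (ξ n ω i - c i) ∂P
        = ∫ ω, (ξ n ω i ^ 2 - 2 * c i * ξ n ω i + c i ^ 2) ∂P :=
      integral_congr_ae (Filter.Eventually.of_forall fun ω => by ring)
    have hA : Integrable (fun ω => ξ n ω i ^ 2 - 2 * c i * ξ n ω i) P :=
      hInt2.sub (hInt1.const_mul (2 * c i))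
    rw [hrw, integral_add hA (integrable_const _),
      integral_sub hInt2 (hInt1.const_mul (2 * c i)), integral_const_mul, coordMean n i,
      integral_const] at hv
    simp only [probReal_univ, smul_eq_mul, one_mul] at hv
    linear_combination hv
  -- measurability of m
  have hmmeas : ∀ k, Measurable (m k) := by
    intro k; induction k with
    | zero => rw [show m 0 = ξ 0 from funext hm0]; exact hmeas 0
    | succ k ih =>
        rw [show m (k+1) = fun ω => β • m k ω + (1 - β) • ξ (k+1) ω from funext (hmrec k)]
        exact (ih.const_smul β).add ((hmeas (k+1)).const_smul (1 - β))
  -- m k is a measurable function of ξ 0, …, ξ k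
  have hrep : ∀ k, ∃ G : ((Finset.range (k+1) : Finset ℕ) → EuclideanSpace ℝ (Fin d)) →
      EuclideanSpace ℝ (Fin d), Measurable G ∧ ∀ ω, m k ω = G (fun j => ξ j ω) := by
    intro k; induction k with
    | zero =>
        exact ⟨fun v => v ⟨0, by simp⟩, measurable_pi_apply _, fun ω => hm0 ω⟩
    | succ k ih =>
        obtain ⟨G, hG, hGe⟩ := ih
        have hmem : ∀ j : (Finset.range (k+1) : Finset ℕ), (j : ℕ) ∈ Finset.range (k+2) := by
          intro j; have := j.2; simp only [Finset.mem_range] at this ⊢; omega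
        refine ⟨fun v => β • G (fun j => v ⟨j.1, hmem j⟩) + (1 - β) • v ⟨k+1, by simp⟩,
          ?_, fun ω => by rw [hmrec k ω, hGe ω]⟩
        have hres : Measurable fun (v : (Finset.range (k+2) : Finset ℕ) → EuclideanSpace ℝ (Fin d)) =>
            (fun j : (Finset.range (k+1) : Finset ℕ) => v ⟨j.1, hmem j⟩) :=
          measurable_pi_lambda _ fun j => measurable_pi_apply _
        exact ((hG.comp hres).const_smul β).add ((measurable_pi_apply (⟨k+1, by simp⟩ : (Finset.range (k+2) : Finset ℕ))).const_smul (1 - β))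
  -- independence of m k and ξ (k+1)
  have hindepm : ∀ k, IndepFun (m k) (ξ (k+1)) P := by
    intro k
    obtain ⟨G, hG, hGe⟩ := hrep k
    have hd : Disjoint (Finset.range (k+1)) ({k+1} : Finset ℕ) := by
      rw [Finset.disjoint_left]
      intro a ha hb
      simp only [Finset.mem_range] at ha
      simp only [Finset.mem_singleton] at hb
      omega
    have h := (hindep.indepFun_finset (Finset.range (k+1)) {k+1} hd hmeas).comp hG
      (measurable_pi_apply (⟨k+1, Finset.mem_singleton_self _⟩ : ({k+1} : Finset ℕ)))
    have e1 : (G ∘ fun a (j : (Finset.range (k+1) : Finset ℕ)) => ξ j a) = m k :=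
      funext fun ω => (hGe ω).symm
    have e2 : ((fun v : ({k+1} : Finset ℕ) → EuclideanSpace ℝ (Fin d) =>
        v ⟨k+1, Finset.mem_singleton_self _⟩) ∘ fun a (i : ({k+1} : Finset ℕ)) => ξ i a)
        = ξ (k+1) := rfl
    rwa [e1, e2] at h
  have hindepc : ∀ k (i : Fin d),
      IndepFun (fun ω => m k ω i) (fun ω => ξ (k+1) ω i) P := by
    intro k i
    exact (hindepm k).comp (heval i) (heval i)
  -- main induction carrying integrability, means and second moments
  have key : ∀ k, Integrable (m k) P ∧ Integrable (fun ω => ‖m k ω‖ ^ 2) P ∧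
      (∀ i, ∫ ω, m k ω i ∂P = c i) ∧ ∫ ω, ‖m k ω‖ ^ 2 ∂P = ‖c‖ ^ 2 + s * d := by
    intro k; induction k with
    | zero =>
        have hminteq : m 0 = ξ 0 := funext hm0
        have hI : Integrable (m 0) P := by rw [hminteq]; exact hint 0
        have hS : Integrable (fun ω => ‖m 0 ω‖ ^ 2) P := by
          rw [show (fun ω => ‖m 0 ω‖ ^ 2) = fun ω => ‖ξ 0 ω‖ ^ 2 from by
            funext ω; rw [hm0 ω]]
          exact hsq 0
        refine ⟨hI, hS, ?_, ?_⟩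
        · intro i
          rw [show (fun ω => m 0 ω i) = fun ω => ξ 0 ω i from by funext ω; rw [hm0 ω]]
          exact coordMean 0 i
        · rw [normSqSplit (hmmeas 0) hS]
          have hc : ∀ i : Fin d, ∫ ω, m 0 ω i ^ 2 ∂P = s + c i ^ 2 := by
            intro i
            rw [show (fun ω => m 0 ω i ^ 2) = fun ω => ξ 0 ω i ^ 2 from by
              funext ω; rw [hm0 ω]]
            exact xiSq 0 i s (by simpa using hm0cov i i)
          rw [Finset.sum_congr rfl fun i _ => hc i, Finset.sum_add_distrib,
            Finset.sum_const, ← euclid_norm_sq c]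
          simp only [Finset.card_univ, Fintype.card_fin, nsmul_eq_mul]
          ring
    | succ k ih =>
        obtain ⟨hInt, hSq, hMean, hVal⟩ := ih
        have hI' : Integrable (m (k+1)) P := by
          rw [show m (k+1) = fun ω => β • m k ω + (1 - β) • ξ (k+1) ω from funext (hmrec k)]
          exact (hInt.smul β).add ((hint (k+1)).smul (1 - β))
        have hS' : Integrable (fun ω => ‖m (k+1) ω‖ ^ 2) P := by
          have hg : Integrable (fun ω => 2 * ‖m k ω‖ ^ 2 + 2 * ‖ξ (k+1) ω‖ ^ 2) P :=
            (hSq.const_mul 2).add ((hsq (k+1)).const_mul 2)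
          refine hg.mono
            (((hmmeas (k+1)).norm.pow_const 2).aestronglyMeasurable)
            (Filter.Eventually.of_forall fun ω => ?_)
          rw [Real.norm_eq_abs, Real.norm_eq_abs, abs_of_nonneg (sq_nonneg _),
            abs_of_nonneg (by positivity)]
          rw [hmrec k ω]
          have h1 : ‖β • m k ω + (1 - β) • ξ (k+1) ω‖ ≤ ‖m k ω‖ + ‖ξ (k+1) ω‖ := by
            refine (norm_add_le _ _).trans ?_
            rw [norm_smul, norm_smul, Real.norm_eq_abs, Real.norm_eq_abs,
              abs_of_pos hβ0, abs_of_pos (by linarith : (0:ℝ) < 1 - β)]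
            have := norm_nonneg (m k ω); have := norm_nonneg (ξ (k+1) ω)
            nlinarith
          nlinarith [norm_nonneg (β • m k ω + (1 - β) • ξ (k+1) ω),
            norm_nonneg (m k ω), norm_nonneg (ξ (k+1) ω),
            sq_nonneg (‖m k ω‖ - ‖ξ (k+1) ω‖)]
        have hcoordeq : ∀ (i : Fin d) ω, m (k+1) ω i
            = β * m k ω i + (1 - β) * ξ (k+1) ω i := by
          intro i ω; rw [hmrec k ω]; rfl
        have hM' : ∀ i, ∫ ω, m (k+1) ω i ∂P = c i := by
          intro i
          rw [show (fun ω => m (k+1) ω i)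
              = fun ω => β * m k ω i + (1 - β) * ξ (k+1) ω i from funext (hcoordeq i)]
          have hA : Integrable (fun ω => β * m k ω i) P := (coordInt_of hInt i).const_mul β
          have hB : Integrable (fun ω => (1 - β) * ξ (k+1) ω i) P :=
            (coordInt_of (hint (k+1)) i).const_mul (1 - β)
          rw [integral_add hA hB, integral_const_mul, integral_const_mul, hMean i,
            coordMean (k+1) i]
          ring
        refine ⟨hI', hS', hM', ?_⟩
        have hcoord : ∀ i : Fin d, ∫ ω, m (k+1) ω i ^ 2 ∂P
            = β ^ 2 * ∫ ω, m k ω i ^ 2 ∂P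
              + (2 * β * (1 - β)) * (c i * c i) + (1 - β) ^ 2 * (σ ^ 2 + c i ^ 2) := by
          intro i
          have hIm := coordInt_of hInt i
          have hIg := coordInt_of (hint (k+1)) i
          have hImul : Integrable (fun ω => m k ω i * ξ (k+1) ω i) P :=
            (hindepc k i).integrable_mul hIm hIg
          have hImsq := sqInt_of (hmmeas k) hSq i
          have hIgsq := sqInt_of (hmeas (k+1)) (hsq (k+1)) i
          have hexp : (fun ω => m (k+1) ω i ^ 2) = fun ω =>
              (β ^ 2 * (m k ω i ^ 2) + (2 * β * (1 - β)) * (m k ω i * ξ (k+1) ω i))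
              + (1 - β) ^ 2 * (ξ (k+1) ω i ^ 2) := by
            funext ω; rw [hcoordeq i ω]; ring
          have hA : Integrable (fun ω => β ^ 2 * (m k ω i ^ 2)
              + (2 * β * (1 - β)) * (m k ω i * ξ (k+1) ω i)) P :=
            (hImsq.const_mul _).add (hImul.const_mul _)
          have hB : Integrable (fun ω => (1 - β) ^ 2 * (ξ (k+1) ω i ^ 2)) P :=
            hIgsq.const_mul _
          have hA1 : Integrable (fun ω => β ^ 2 * (m k ω i ^ 2)) P := hImsq.const_mul _
          have hA2 : Integrable (fun ω => (2 * β * (1 - β)) * (m k ω i * ξ (k+1) ω i)) P :=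
            hImul.const_mul _
          have hmul : ∫ ω, m k ω i * ξ (k+1) ω i ∂P
              = (∫ ω, m k ω i ∂P) * ∫ ω, ξ (k+1) ω i ∂P :=
            IndepFun.integral_mul_eq_mul_integral (hindepc k i) hIm.aestronglyMeasurable
              hIg.aestronglyMeasurable
          rw [hexp, integral_add hA hB, integral_add hA1 hA2,
            integral_const_mul, integral_const_mul, integral_const_mul,
            hmul, hMean i, coordMean (k+1) i,
            xiSq (k+1) i (σ ^ 2) (by simpa using hgcov k i i)]
        rw [normSqSplit (hmmeas (k+1)) hS', Finset.sum_congr rfl fun i _ => hcoord i]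
        have hsum1 : ∑ i : Fin d, ∫ ω, m k ω i ^ 2 ∂P = ‖c‖ ^ 2 + s * d := by
          rw [← normSqSplit (hmmeas k) hSq]; exact hVal
        have hsum2 : ∑ i : Fin d, c i * c i = ‖c‖ ^ 2 := by
          rw [euclid_norm_sq c]; exact Finset.sum_congr rfl fun i _ => (sq (c i)).symm
        rw [Finset.sum_add_distrib, Finset.sum_add_distrib, ← Finset.mul_sum,
          ← Finset.mul_sum, ← Finset.mul_sum, hsum1, hsum2, Finset.sum_add_distrib,
          Finset.sum_const, ← euclid_norm_sq c]
        simp only [Finset.card_univ, Fintype.card_fin, nsmul_eq_mul]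
        rw [hsdef]
        field_simp
        ring
  constructor
  · exact fun k => (key (k+1)).2.2.2
  · intro K hK
    have hxd : ∀ k (ω : Ω), ‖x (k+1) ω - x k ω‖ = η * ‖m (k+1) ω‖ := by
      intro k ω
      rw [hxrec k ω, sub_sub_cancel_left, norm_neg, norm_smul, Real.norm_eq_abs,
        abs_of_pos hη]
    have hXint : ∀ k, Integrable (fun ω => ‖x (k+1) ω - x k ω‖) P := by
      intro k
      rw [show (fun ω => ‖x (k+1) ω - x k ω‖) = fun ω => η * ‖m (k+1) ω‖ from
        funext (hxd k)]
      exact ((key (k+1)).1.norm.const_mul η)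
    have hbound : ∀ k, ∫ ω, ‖x (k+1) ω - x k ω‖ ∂P
        ≤ η * Real.sqrt (‖c‖ ^ 2 + s * d) := by
      intro k
      rw [show (fun ω => ‖x (k+1) ω - x k ω‖) = fun ω => η * ‖m (k+1) ω‖ from
        funext (hxd k), integral_const_mul]
      have hX : MemLp (fun ω => ‖m (k+1) ω‖) 2 P :=
        (memLp_two_iff_integrable_sq ((hmmeas (k+1)).norm.aestronglyMeasurable)).2
          ((key (k+1)).2.1)
      have hvar := variance_nonneg (fun ω => ‖m (k+1) ω‖) P
      rw [variance_eq_sub hX] at hvar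
      simp only [Pi.pow_apply] at hvar
      have h1 : (∫ ω, ‖m (k+1) ω‖ ∂P) ^ 2 ≤ ∫ ω, ‖m (k+1) ω‖ ^ 2 ∂P := by linarith
      have h0 : 0 ≤ ∫ ω, ‖m (k+1) ω‖ ∂P := integral_nonneg fun ω => norm_nonneg _
      have h2 : ∫ ω, ‖m (k+1) ω‖ ∂P ≤ Real.sqrt (‖c‖ ^ 2 + s * d) := by
        calc ∫ ω, ‖m (k+1) ω‖ ∂P = Real.sqrt ((∫ ω, ‖m (k+1) ω‖ ∂P) ^ 2) :=
              (Real.sqrt_sq h0).symm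
          _ ≤ Real.sqrt (∫ ω, ‖m (k+1) ω‖ ^ 2 ∂P) := Real.sqrt_le_sqrt h1
          _ = Real.sqrt (‖c‖ ^ 2 + s * d) := by rw [(key (k+1)).2.2.2]
      exact mul_le_mul_of_nonneg_left h2 hη.le
    calc ∫ ω, (∑ k ∈ Finset.range K, ‖x (k + 1) ω - x k ω‖) ∂P
        = ∑ k ∈ Finset.range K, ∫ ω, ‖x (k + 1) ω - x k ω‖ ∂P :=
          integral_finset_sum _ (fun k _ => hXint k)
      _ ≤ ∑ k ∈ Finset.range K, η * Real.sqrt (‖c‖ ^ 2 + s * d) :=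
          Finset.sum_le_sum fun k _ => hbound k
      _ = (K : ℝ) * η * Real.sqrt (‖c‖ ^ 2 + s * d) := by
          rw [Finset.sum_const, Finset.card_range, nsmul_eq_mul]; ring
end

section
/- Let g: [0,∞) → [0,∞) be a nondecreasing right-continuous function with g(0) = 0, with associated Lebesgue–Stieltjes measure μ_g, and let f: [0,∞) → [0,∞) be a càdlàg function. Suppose there is a constant C ≥ 0 such that for every t ≥ 0, f(t) ≤ C + ∫_{(0,t]} f(s−) μ_g(ds), where f(s−) denotes the left limit of f at s. Then f(t) ≤ C e^{g(t)} for all t ≥ 0. -/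
open MeasureTheory Set Function Filter

-- measure bound: μ {s ∈ Ioc 0 T : x < leftLim g s} ≤ ofReal (g T - x)
lemma meas_bound (g : StieltjesFunction ℝ) (T x : ℝ) :
    g.measure {s | s ∈ Set.Ioc 0 T ∧ x < Function.leftLim g s}
      ≤ ENNReal.ofReal (g T - x) := by
  set A : Set ℝ := {s | s ∈ Set.Ioc 0 T ∧ x < Function.leftLim g s} with hA
  rcases A.eq_empty_or_nonempty with h | h
  · simp [h]
  have hbdd : BddBelow A := ⟨0, fun s hs => le_of_lt hs.1.1⟩
  set c := sInf A with hc
  by_cases hcA : c ∈ A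
  · have hsub : A ⊆ Set.Icc c T := fun s hs => ⟨csInf_le hbdd hs, hs.1.2⟩
    calc g.measure A ≤ g.measure (Set.Icc c T) := measure_mono hsub
      _ = ENNReal.ofReal (g T - Function.leftLim g c) := g.measure_Icc c T
      _ ≤ ENNReal.ofReal (g T - x) := by
          apply ENNReal.ofReal_le_ofReal; linarith [hcA.2]
  · have hxc : x ≤ g c := by
      have hev : ∀ r, c < r → x < g r := by
        intro r hr
        obtain ⟨s, hsA, hsr⟩ := exists_lt_of_csInf_lt h hr
        calc x < Function.leftLim g s := hsA.2
          _ ≤ g s := Monotone.leftLim_le g.mono le_rfl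
          _ ≤ g r := g.mono hsr.le
      have htend : Filter.Tendsto g (nhdsWithin c (Set.Ioi c)) (nhds (g c)) :=
        (g.right_continuous c).tendsto.mono_left
          (nhdsWithin_mono c Set.Ioi_subset_Ici_self)
      exact ge_of_tendsto htend (eventually_mem_nhdsWithin.mono
        (fun r hr => (hev r hr).le))
    have hsub : A ⊆ Set.Ioc c T := by
      intro s hs
      refine ⟨lt_of_le_of_ne (csInf_le hbdd hs) ?_, hs.1.2⟩
      rintro rfl; exact hcA hs
    calc g.measure A ≤ g.measure (Set.Ioc c T) := measure_mono hsub
      _ = ENNReal.ofReal (g T - g c) := g.measure_Ioc c T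
      _ ≤ ENNReal.ofReal (g T - x) := by
          apply ENNReal.ofReal_le_ofReal; linarith

lemma leftLim_measurable (g : StieltjesFunction ℝ) :
    Measurable (fun s => Real.exp (Function.leftLim g s)) :=
  Real.continuous_exp.measurable.comp (Monotone.leftLim g.mono).measurable

-- the key lemma
lemma key (g : StieltjesFunction ℝ) (hg0 : g 0 = 0) (T : ℝ) (hT : 0 ≤ T) :
    IntegrableOn (fun s => Real.exp (Function.leftLim g s)) (Set.Ioc 0 T) g.measure ∧
    ∫ s in Set.Ioc 0 T, Real.exp (Function.leftLim g s) ∂g.measure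
      ≤ Real.exp (g T) - 1 := by
  set a := g T with ha
  have ha0 : 0 ≤ a := by rw [ha, ← hg0]; exact g.mono hT
  set ν := g.measure.restrict (Set.Ioc 0 T) with hν
  set F : ℝ → ℝ := fun s => Real.exp (Function.leftLim g s) with hF
  have hFm : Measurable F := leftLim_measurable g
  have hFnn : ∀ s, 0 ≤ F s := fun s => (Real.exp_pos _).le
  -- layer cake
  have hlayer : ∫⁻ s, ENNReal.ofReal (F s) ∂ν
      = ∫⁻ x in Set.Ioi (0:ℝ), ν {s | x < F s} := by
    refine lintegral_eq_lintegral_meas_lt ν ?_ hFm.aemeasurable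
    exact Filter.Eventually.of_forall hFnn
  -- bound the measure for each x
  have hb1 : ∀ x : ℝ, ν {s | x < F s} ≤ ENNReal.ofReal a := by
    intro x
    calc ν {s | x < F s} ≤ ν Set.univ := measure_mono (Set.subset_univ _)
      _ = g.measure (Set.Ioc 0 T) := by rw [hν, Measure.restrict_apply_univ]
      _ = ENNReal.ofReal (g T - g 0) := g.measure_Ioc 0 T
      _ = ENNReal.ofReal a := by rw [hg0, ha, sub_zero]
  have hb2 : ∀ x : ℝ, 1 ≤ x → ν {s | x < F s} ≤ ENNReal.ofReal (a - Real.log x) := by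
    intro x hx
    have hx0 : 0 < x := lt_of_lt_of_le one_pos hx
    have hmeas : MeasurableSet {s : ℝ | x < F s} := measurableSet_lt measurable_const hFm
    rw [hν, Measure.restrict_apply hmeas]
    have hset : {s : ℝ | x < F s} ∩ Set.Ioc 0 T
        = {s | s ∈ Set.Ioc 0 T ∧ Real.log x < Function.leftLim g s} := by
      ext s
      simp only [Set.mem_inter_iff, Set.mem_setOf_eq, hF]
      constructor
      · rintro ⟨hlt, hs⟩; exact ⟨hs, (Real.log_lt_iff_lt_exp hx0).mpr hlt⟩
      · rintro ⟨hs, hlt⟩; exact ⟨(Real.log_lt_iff_lt_exp hx0).mp hlt, hs⟩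
    rw [hset]
    exact meas_bound g T (Real.log x)
  -- bound the lintegral
  have hsplit : ∫⁻ x in Set.Ioi (0:ℝ), ν {s | x < F s}
      ≤ ENNReal.ofReal a + ENNReal.ofReal (Real.exp a - a - 1) := by
    have hd : Set.Ioi (0:ℝ) = Set.Ioc 0 1 ∪ Set.Ioi 1 := by
      rw [Set.Ioc_union_Ioi_eq_Ioi]; norm_num
    rw [hd, lintegral_union measurableSet_Ioi Set.Ioc_disjoint_Ioi_same]
    gcongr
    · calc ∫⁻ x in Set.Ioc (0:ℝ) 1, ν {s | x < F s}
          ≤ ∫⁻ _x in Set.Ioc (0:ℝ) 1, ENNReal.ofReal a :=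
            lintegral_mono (fun x => hb1 x)
        _ = ENNReal.ofReal a := by
            rw [setLIntegral_const]
            simp [Real.volume_Ioc]
    · calc ∫⁻ x in Set.Ioi (1:ℝ), ν {s | x < F s}
          ≤ ∫⁻ x in Set.Ioi (1:ℝ), ENNReal.ofReal (a - Real.log x) := by
            refine setLIntegral_mono' measurableSet_Ioi (fun x hx => hb2 x hx.le)
        _ ≤ ENNReal.ofReal (Real.exp a - a - 1) := by
            have h1e : (1:ℝ) ≤ Real.exp a := Real.one_le_exp ha0
            have hd2 : Set.Ioi (1:ℝ)
                = Set.Ioc 1 (Real.exp a) ∪ Set.Ioi (Real.exp a) :=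
              (Set.Ioc_union_Ioi_eq_Ioi h1e).symm
            rw [hd2, lintegral_union measurableSet_Ioi Set.Ioc_disjoint_Ioi_same]
            have hz : ∫⁻ x in Set.Ioi (Real.exp a),
                ENNReal.ofReal (a - Real.log x) = 0 := by
              rw [setLIntegral_congr_fun measurableSet_Ioi
                (fun x hx => ?_), lintegral_zero]
              have hx0 : (0:ℝ) < x := lt_of_lt_of_le (Real.exp_pos a) hx.le
              have : a < Real.log x := (Real.lt_log_iff_exp_lt hx0).mpr hx
              exact ENNReal.ofReal_eq_zero.mpr (by linarith)
            rw [hz, add_zero]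
            have hcont : ContinuousOn (fun x => a - Real.log x)
                (Set.Icc 1 (Real.exp a)) := by
              refine continuousOn_const.sub (Real.continuousOn_log.mono ?_)
              intro x hx
              simp only [Set.mem_compl_iff, Set.mem_singleton_iff]
              intro h; rw [h] at hx; linarith [hx.1]
            have hInt : IntegrableOn (fun x => a - Real.log x)
                (Set.Ioc 1 (Real.exp a)) volume :=
              (hcont.integrableOn_compact isCompact_Icc).mono_set
                Set.Ioc_subset_Icc_self
            have hnn : 0 ≤ᵐ[volume.restrict (Set.Ioc 1 (Real.exp a))]
                (fun x => a - Real.log x) := by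
              refine (ae_restrict_iff' measurableSet_Ioc).mpr
                (Filter.Eventually.of_forall (fun x hx => ?_))
              have hx0 : (0:ℝ) < x := lt_of_lt_of_le one_pos hx.1.le
              have : Real.log x ≤ a := (Real.log_le_iff_le_exp hx0).mpr hx.2
              simp only [Pi.zero_apply]; linarith
            rw [← ofReal_integral_eq_lintegral_ofReal hInt hnn]
            apply ENNReal.ofReal_le_ofReal
            have hval : ∫ x in Set.Ioc 1 (Real.exp a), (a - Real.log x)
                = Real.exp a - a - 1 := by
              rw [← intervalIntegral.integral_of_le h1e]
              have hlog : IntervalIntegrable Real.log volume 1 (Real.exp a) :=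
                intervalIntegral.intervalIntegrable_log (by
                  simp only [Set.mem_uIcc]; push_neg
                  constructor <;> intro h <;> nlinarith [Real.exp_pos a])
              rw [intervalIntegral.integral_sub intervalIntegrable_const hlog,
                intervalIntegral.integral_const,
                integral_log]
              simp [Real.log_exp, Real.log_one]
              ring
            rw [hval]
  -- conclude
  have hfin : ∫⁻ s, ENNReal.ofReal (F s) ∂ν ≤ ENNReal.ofReal (Real.exp a - 1) := by
    rw [hlayer]
    refine hsplit.trans (le_of_eq ?_)
    rw [← ENNReal.ofReal_add ha0 (by nlinarith [Real.add_one_le_exp a])]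
    ring_nf
  have hIF : IntegrableOn F (Set.Ioc 0 T) g.measure := by
    refine ⟨hFm.aestronglyMeasurable, ?_⟩
    rw [hasFiniteIntegral_iff_ofReal (Filter.Eventually.of_forall hFnn)]
    exact lt_of_le_of_lt hfin ENNReal.ofReal_lt_top
  refine ⟨hIF, ?_⟩
  rw [show (∫ s in Set.Ioc 0 T, Real.exp (Function.leftLim g s) ∂g.measure)
      = ∫ s, F s ∂ν from rfl]
  rw [integral_eq_lintegral_of_nonneg_ae (Filter.Eventually.of_forall hFnn)
    hFm.aestronglyMeasurable]
  calc (∫⁻ s, ENNReal.ofReal (F s) ∂ν).toReal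
      ≤ (ENNReal.ofReal (Real.exp a - 1)).toReal :=
        ENNReal.toReal_mono ENNReal.ofReal_ne_top hfin
    _ = Real.exp a - 1 := ENNReal.toReal_ofReal (by nlinarith [Real.add_one_le_exp a])

/-- Grönwall's inequality for Lebesgue–Stieltjes integrals: if `g` is a nondecreasing
right-continuous function (a Stieltjes function) with `g 0 = 0`, nonnegative on `[0,∞)`,
`f : [0,∞) → [0,∞)` is càdlàg (right-continuous with left limits), `C ≥ 0`, and
`f t ≤ C + ∫_{(0,t]} f(s−) dμ_g(s)` for all `t ≥ 0`, then `f t ≤ C e^{g t}` for all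
`t ≥ 0`. -/
theorem stmt_12 (g : StieltjesFunction ℝ) (hg0 : g 0 = 0)
    (hg_nonneg : ∀ t, 0 ≤ t → 0 ≤ g t)
    (f : ℝ → ℝ) (C : ℝ) (hC : 0 ≤ C)
    (hf_nonneg : ∀ t, 0 ≤ t → 0 ≤ f t)
    (hf_rightcont : ∀ s : ℝ, ContinuousWithinAt f (Set.Ici s) s)
    (hf_leftlim : ∀ s : ℝ,
      Filter.Tendsto f (nhdsWithin s (Set.Iio s)) (nhds (Function.leftLim f s)))
    (hineq : ∀ t, 0 ≤ t →
      f t ≤ C + ∫ s in Set.Ioc (0 : ℝ) t, Function.leftLim f s ∂g.measure) :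
    ∀ t, 0 ≤ t → f t ≤ C * Real.exp (g t) := by
  intro t₀ ht₀
  have hmain : ∀ ε : ℝ, 0 < ε → f t₀ ≤ (C + ε) * Real.exp (g t₀) := by
    intro ε hε
    by_contra hcon
    push_neg at hcon
    set S : Set ℝ := {u | u ∈ Set.Icc 0 t₀ ∧ (C + ε) * Real.exp (g u) < f u} with hSdef
    have hS : S.Nonempty := ⟨t₀, ⟨⟨ht₀, le_rfl⟩, hcon⟩⟩
    have hbdd : BddBelow S := ⟨0, fun u hu => hu.1.1⟩
    set θ := sInf S with hθdef
    have hθ0 : 0 ≤ θ := le_csInf hS (fun u hu => hu.1.1)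
    have hθt : θ ≤ t₀ := csInf_le hbdd ⟨⟨ht₀, le_rfl⟩, hcon⟩
    have hbelow : ∀ r, 0 ≤ r → r < θ → f r ≤ (C + ε) * Real.exp (g r) := by
      intro r hr hrθ
      by_contra h
      push_neg at h
      exact absurd (csInf_le hbdd ⟨⟨hr, hrθ.le.trans hθt⟩, h⟩) (not_le.mpr hrθ)
    have hll : ∀ s ∈ Set.Ioc 0 θ,
        Function.leftLim f s ≤ (C + ε) * Real.exp (Function.leftLim g s) := by
      intro s hs
      have h2 : Filter.Tendsto (fun r => (C + ε) * Real.exp (g r))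
          (nhdsWithin s (Set.Iio s))
          (nhds ((C + ε) * Real.exp (Function.leftLim g s))) :=
        (((Real.continuous_exp.tendsto _).comp (g.mono.tendsto_leftLim s)).const_mul _)
      refine le_of_tendsto_of_tendsto (hf_leftlim s) h2 ?_
      filter_upwards [Ioo_mem_nhdsLT_of_mem (⟨hs.1, le_rfl⟩ : s ∈ Set.Ioc 0 s)]
        with r hr
      exact hbelow r hr.1.le (lt_of_lt_of_le hr.2 hs.2)
    have hll0 : ∀ s ∈ Set.Ioc 0 θ, 0 ≤ Function.leftLim f s := by
      intro s hs
      refine ge_of_tendsto (hf_leftlim s) ?_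
      filter_upwards [Ioo_mem_nhdsLT_of_mem (⟨hs.1, le_rfl⟩ : s ∈ Set.Ioc 0 s)]
        with r hr
      exact hf_nonneg r hr.1.le
    obtain ⟨hIF, hkey⟩ := key g hg0 θ hθ0
    have hmono : ∫ s in Set.Ioc 0 θ, Function.leftLim f s ∂g.measure
        ≤ ∫ s in Set.Ioc 0 θ,
            (C + ε) * Real.exp (Function.leftLim g s) ∂g.measure := by
      refine integral_mono_of_nonneg ?_ (hIF.const_mul _) ?_
      · refine (ae_restrict_iff' measurableSet_Ioc).mpr
          (Filter.Eventually.of_forall (fun s hs => ?_))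
        simpa using hll0 s hs
      · refine (ae_restrict_iff' measurableSet_Ioc).mpr
          (Filter.Eventually.of_forall (fun s hs => hll s hs))
    have hintmul : ∫ s in Set.Ioc 0 θ,
        (C + ε) * Real.exp (Function.leftLim g s) ∂g.measure
        = (C + ε) * ∫ s in Set.Ioc 0 θ,
            Real.exp (Function.leftLim g s) ∂g.measure := integral_const_mul _ _
    have hCε : (0:ℝ) < C + ε := by linarith
    have hfθ : f θ ≤ (C + ε) * Real.exp (g θ) - ε := by
      have h1 := hineq θ hθ0
      have h2 : (C + ε) * ∫ s in Set.Ioc 0 θ,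
          Real.exp (Function.leftLim g s) ∂g.measure
          ≤ (C + ε) * (Real.exp (g θ) - 1) := by
        exact mul_le_mul_of_nonneg_left hkey hCε.le
      rw [hintmul] at hmono
      nlinarith
    have hθnotS : θ ∉ S := by
      intro h
      have := h.2
      linarith
    have ht : f ⁻¹' (Set.Iio (f θ + ε)) ∈ nhdsWithin θ (Set.Ici θ) :=
      (hf_rightcont θ) (Iio_mem_nhds (lt_add_of_pos_right _ hε))
    obtain ⟨b, hb, hsub⟩ := mem_nhdsGE_iff_exists_Ico_subset.mp ht
    obtain ⟨u, huS, hub⟩ := exists_lt_of_csInf_lt hS hb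
    have hθu : θ ≤ u := csInf_le hbdd huS
    have hfu : f u < f θ + ε := hsub ⟨hθu, hub⟩
    have hgu : Real.exp (g θ) ≤ Real.exp (g u) := Real.exp_le_exp.mpr (g.mono hθu)
    have := huS.2
    nlinarith
  refine le_of_forall_pos_le_add ?_
  intro ε' hε'
  have hεe : 0 < ε' / Real.exp (g t₀) := div_pos hε' (Real.exp_pos _)
  have := hmain _ hεe
  have hexp : (ε' / Real.exp (g t₀)) * Real.exp (g t₀) = ε' :=
    div_mul_cancel₀ _ (Real.exp_ne_zero _)
  nlinarith
end

section
/- In the stochastic SGDM setup with a hyperparameter schedule scaled by η with index α ∈ [0,1) and noise scale σ ≤ η^{−1/2}, fix T > 0. There exists a constant f(T), depending only on T, d, α, L_lip, C_tr, η_max, λ_min, λ_max, ‖∇L(x_0)‖, ‖x_0‖ and E‖m_0‖² (but not on η), such that for all η < min((λ_min³/(12 L_lip λ_max² η_max))^{1/(1−α)}, 1), sup_{0 ≤ k ≤ ⌊T/η⌋} E‖∇L(x_k)‖² ≤ f(T). -/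
open MeasureTheory ProbabilityTheory
open scoped ENNReal
set_option linter.unusedSectionVars false
set_option maxHeartbeats 1000000

section Helpers

variable {Ω : Type} {mΩ : MeasurableSpace Ω} {P : Measure Ω} [IsProbabilityMeasure P] {d : ℕ}

local notation "E" => EuclideanSpace ℝ (Fin d)

lemma sq_norm_integrable {f : Ω → E} (hf : MemLp f 2 P) :
    Integrable (fun ω => ‖f ω‖ ^ 2) P :=
  (memLp_two_iff_integrable_sq_norm hf.aestronglyMeasurable).mp hf

lemma inner_integrable {f g : Ω → E} (hf : MemLp f 2 P) (hg : MemLp g 2 P) :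
    Integrable (fun ω => (inner ℝ (f ω) (g ω) : ℝ)) P := by
  have hprod : Integrable (fun ω => ‖f ω‖ * ‖g ω‖) P := by
    have h12 : (1 : ℝ≥0∞) / 1 = 1 / 2 + 1 / 2 := by rw [ENNReal.div_add_div_same]; norm_num; rw [ENNReal.div_self two_ne_zero ENNReal.ofNat_ne_top]
    have := (hg.norm.smul hf.norm : MemLp ((fun ω => ‖f ω‖) • (fun ω => ‖g ω‖)) 1 P)
    rw [memLp_one_iff_integrable] at this
    exact this
  refine hprod.mono' (hf.aestronglyMeasurable.inner hg.aestronglyMeasurable) ?_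
  filter_upwards with ω
  simpa using norm_inner_le_norm (𝕜 := ℝ) (f ω) (g ω)

lemma condexp_component_zero (F : Filtration ℕ mΩ) (k : ℕ) {v : Ω → E}
    (hvint : Integrable v P) (hv0 : P[v|F k] =ᵐ[P] 0) (i : Fin d) :
    P[fun ω => v ω i|F k] =ᵐ[P] 0 := by
  haveI : SigmaFinite (P.trim (F.le k)) := by infer_instance
  have hvi : Integrable (fun ω => v ω i) P := by
    have := (EuclideanSpace.proj (𝕜 := ℝ) i).integrable_comp hvint
    simpa using this
  refine (ae_eq_condExp_of_forall_setIntegral_eq (F.le k) hvi ?_ ?_ ?_).symm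
  · intro s _ _
    exact (integrable_zero _ _ _).integrableOn
  · intro s hs _
    have hset : ∫ ω in s, v ω ∂P = 0 := by
      rw [← setIntegral_condExp (F.le k) hvint hs]
      have hres : ∫ ω in s, (P[v|F k]) ω ∂P = ∫ ω in s, (0 : Ω → E) ω ∂P :=
        integral_congr_ae (ae_restrict_of_ae hv0)
      simpa using hres
    have hcomm := (EuclideanSpace.proj (𝕜 := ℝ) i).integral_comp_comm
      (hvint.integrableOn (s := s))
    have hproj : ∀ ω, (EuclideanSpace.proj (𝕜 := ℝ) i) (v ω) = v ω i := fun ω => rfl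
    simp only [hproj] at hcomm
    rw [hcomm, hset]
    simp
  · exact (stronglyMeasurable_zero :
      StronglyMeasurable[F k] (0 : Ω → ℝ)).aestronglyMeasurable

lemma integral_inner_noise_zero (F : Filtration ℕ mΩ) (k : ℕ) {f v : Ω → E}
    (hfm : StronglyMeasurable[F k] f) (hf : MemLp f 2 P) (hv : MemLp v 2 P)
    (hv0 : P[v|F k] =ᵐ[P] 0) :
    ∫ ω, (inner ℝ (f ω) (v ω) : ℝ) ∂P = 0 := by
  haveI : SigmaFinite (P.trim (F.le k)) := by infer_instance
  have hvint : Integrable v P := hv.integrable one_le_two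
  have hfi : ∀ i : Fin d, MemLp (fun ω => f ω i) 2 P := by
    intro i
    have := hf.const_inner (𝕜 := ℝ) (EuclideanSpace.single i (1 : ℝ))
    simpa [EuclideanSpace.inner_single_left] using this
  have hvi : ∀ i : Fin d, MemLp (fun ω => v ω i) 2 P := by
    intro i
    have := hv.const_inner (𝕜 := ℝ) (EuclideanSpace.single i (1 : ℝ))
    simpa [EuclideanSpace.inner_single_left] using this
  have hprod : ∀ i : Fin d, Integrable (fun ω => f ω i * v ω i) P := by
    intro i
    have h12 : (1 : ℝ≥0∞) / 1 = 1 / 2 + 1 / 2 := by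
      rw [ENNReal.div_add_div_same]; norm_num
      rw [ENNReal.div_self two_ne_zero ENNReal.ofNat_ne_top]
    have := ((hvi i).smul (hfi i) :
      MemLp ((fun ω => f ω i) • (fun ω => v ω i)) 1 P)
    rw [memLp_one_iff_integrable] at this
    exact this
  have hterm : ∀ i : Fin d, ∫ ω, f ω i * v ω i ∂P = 0 := by
    intro i
    have hfim : StronglyMeasurable[F k] (fun ω => f ω i) :=
      (EuclideanSpace.proj (𝕜 := ℝ) i).continuous.comp_stronglyMeasurable hfm
    have hprodi : Integrable ((fun ω => f ω i) * (fun ω => v ω i)) P := by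
      exact hprod i
    have hpull := condExp_mul_of_stronglyMeasurable_left (μ := P) hfim hprodi
      ((hvi i).integrable one_le_two)
    have hzero := condexp_component_zero F k hvint hv0 i
    have hcondzero : P[(fun ω => f ω i) * (fun ω => v ω i)|F k] =ᵐ[P] 0 := by
      filter_upwards [hpull, hzero] with ω h1 h2
      simp only [Pi.mul_apply] at h1 ⊢
      rw [h1]
      simp [h2]
    have hint := integral_condExp (μ := P) (F.le k)
      (f := (fun ω => f ω i) * (fun ω => v ω i))
    rw [integral_congr_ae hcondzero] at hint
    simpa [Pi.mul_apply] using hint.symm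
  have hinner : ∀ ω, (inner ℝ (f ω) (v ω) : ℝ) = ∑ i : Fin d, f ω i * v ω i := by
    intro ω
    simp [PiLp.inner_apply, RCLike.inner_apply, conj_trivial, mul_comm]
  simp_rw [hinner]
  rw [integral_finset_sum _ (fun i _ => hprod i)]
  simp [hterm]

lemma norm_combo_sq_le {β : ℝ} (hβ0 : 0 ≤ β) (hβ1 : β ≤ 1) (a b : E) :
    ‖β • a + (1 - β) • b‖ ^ 2 ≤ β * ‖a‖ ^ 2 + (1 - β) * ‖b‖ ^ 2 := by
  have h := norm_add_sq_real (β • a) ((1 - β) • b)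
  have h1 : (inner ℝ (β • a) ((1 - β) • b) : ℝ) = β * (1 - β) * (inner ℝ a b : ℝ) := by
    rw [real_inner_smul_left, real_inner_smul_right]; ring
  have h2 : (inner ℝ a b : ℝ) ≤ ‖a‖ * ‖b‖ := real_inner_le_norm a b
  have h3 : ‖β • a‖ ^ 2 = β ^ 2 * ‖a‖ ^ 2 := by
    rw [norm_smul, mul_pow, Real.norm_eq_abs, sq_abs]
  have h4 : ‖(1 - β) • b‖ ^ 2 = (1 - β) ^ 2 * ‖b‖ ^ 2 := by
    rw [norm_smul, mul_pow, Real.norm_eq_abs, sq_abs]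
  rw [h, h1, h3, h4]
  nlinarith [sq_nonneg (‖a‖ - ‖b‖), mul_nonneg hβ0 (sub_nonneg.mpr hβ1),
    sq_nonneg (‖a‖ + ‖b‖)]

lemma sgdm_key
    {d : ℕ} {Ω : Type} {mΩ : MeasurableSpace Ω} {P : Measure Ω} [IsProbabilityMeasure P]
    (F : Filtration ℕ mΩ)
    (L : EuclideanSpace ℝ (Fin d) → ℝ) (C2 : ℕ → ℝ)
    (α η ηmax lmin lmax σ : ℝ) (ηk βk : ℕ → ℝ) (x0 : EuclideanSpace ℝ (Fin d))
    (x m v : ℕ → Ω → EuclideanSpace ℝ (Fin d))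
    (cG cS cX cA cC c0 : ℝ)
    (hηpos : 0 < η) (hη1 : η ≤ 1) (hα : 0 ≤ α) (hα1 : α < 1)
    (hηmaxpos : 0 < ηmax) (hlminpos : 0 < lmin) (hlmaxpos : 0 < lmax)
    (hgradcont : Continuous (fun z => gradient L z))
    (hηk : ∀ k, 0 ≤ ηk k ∧ ηk k ≤ ηmax * η)
    (hβk : ∀ k, βk k ∈ Set.Ioo (0 : ℝ) 1 ∧ lmin * η ^ α ≤ 1 - βk k ∧ 1 - βk k ≤ lmax * η ^ α)
    (hσpos : 0 < σ) (hσle : σ ≤ η ^ (-(1 : ℝ) / 2))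
    (hx0 : ∀ ω, x 0 ω = x0)
    (hxm : ∀ k, StronglyMeasurable[F k] (x k))
    (hmm : ∀ k, StronglyMeasurable[F k] (m k))
    (hvm : ∀ k, StronglyMeasurable[F (k + 1)] (v k))
    (hv0 : ∀ k, P[fun ω => v k ω|F k] =ᵐ[P] 0)
    (hv2int : ∀ k, Integrable (fun ω => ‖v k ω‖ ^ 2) P)
    (hv2bd : ∀ k, ∀ᵐ ω ∂P, (P[fun ω' => ‖v k ω'‖ ^ 2|F k]) ω
        ≤ (C2 1 * (1 + ‖x k ω‖)) ^ 2)
    (hmrec : ∀ k ω, m (k + 1) ω = βk k • m k ω + (1 - βk k) • (gradient L (x k ω) + σ • v k ω))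
    (hxrec : ∀ k ω, x (k + 1) ω = x k ω - ηk k • m (k + 1) ω)
    (hm0int : Integrable (fun ω => ‖m 0 ω‖ ^ 2) P)
    (hcG : 0 ≤ cG) (hcS : 0 ≤ cS) (hcX : 0 ≤ cX) (hcA : 0 ≤ cA) (hcC : 0 ≤ cC)
    (hc0 : 0 ≤ c0)
    (hgb : ∀ z : EuclideanSpace ℝ (Fin d), ‖gradient L z‖ ^ 2 ≤ cG * (1 + ‖z - x0‖ ^ 2))
    (hsb : ∀ z : EuclideanSpace ℝ (Fin d),
      (C2 1 * (1 + ‖z‖)) ^ 2 ≤ cS * (1 + ‖z - x0‖ ^ 2))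
    (hxX : 1 + cG ≤ 2 * cX)
    (hA0 : ∫ ω, ‖m 0 ω‖ ^ 2 ∂P ≤ cA)
    (hAstep : lmax * cG + lmax ^ 2 * cS ≤ lmin * cA)
    (hCstep : lmax * cX + ηmax * cA ≤ lmin * cC)
    (h0step : 2 * ηmax * (cC + lmax * cX) + ηmax ^ 2 * cA ≤ c0) :
    ∀ k : ℕ, MemLp (x k) 2 P ∧ MemLp (m k) 2 P ∧
      (∫ ω, ‖m k ω‖ ^ 2 ∂P) ≤ cA * η ^ (α - 1) * (1 + c0 * η) ^ k ∧
      |∫ ω, (inner ℝ (x k ω - x0) (m k ω) : ℝ) ∂P| ≤ cC * (1 + c0 * η) ^ k ∧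
      (∫ ω, ‖x k ω - x0‖ ^ 2 ∂P) ≤ (1 + c0 * η) ^ k - 1 := by

  -- rpow facts
  have hppos : 0 < η ^ α := Real.rpow_pos_of_pos hηpos α
  have hp1 : η ^ α ≤ 1 := Real.rpow_le_one hηpos.le hη1 hα
  have hr1 : 1 ≤ η ^ (α - 1) :=
    Real.one_le_rpow_of_pos_of_le_one_of_nonpos hηpos hη1 (by linarith)
  have hrpos : 0 < η ^ (α - 1) := Real.rpow_pos_of_pos hηpos _
  have hσsq' : (η ^ α) ^ 2 * σ ^ 2 ≤ η ^ α * η ^ (α - 1) := by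
    have e1 : (η ^ α) ^ 2 * η ^ (-1 : ℝ) = η ^ (2 * α - 1) := by
      rw [← Real.rpow_natCast (η ^ α) 2, ← Real.rpow_mul hηpos.le,
        ← Real.rpow_add hηpos]
      congr 1
      push_cast
      ring
    have e2 : η ^ α * η ^ (α - 1) = η ^ (2 * α - 1) := by
      rw [← Real.rpow_add hηpos]
      congr 1
      ring
    have h1 : σ ^ 2 ≤ η ^ (-1 : ℝ) := by
      have hbpos : 0 < η ^ (-(1 : ℝ) / 2) := Real.rpow_pos_of_pos hηpos _
      have hle : σ ^ 2 ≤ (η ^ (-(1 : ℝ) / 2)) ^ 2 := by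
        nlinarith only [hσpos, hσle, hbpos]
      have heq : (η ^ (-(1 : ℝ) / 2)) ^ 2 = η ^ (-1 : ℝ) := by
        rw [← Real.rpow_natCast (η ^ (-(1 : ℝ) / 2)) 2, ← Real.rpow_mul hηpos.le]
        norm_num
      linarith only [heq ▸ hle]
    calc (η ^ α) ^ 2 * σ ^ 2 ≤ (η ^ α) ^ 2 * η ^ (-1 : ℝ) := by
          exact mul_le_mul_of_nonneg_left h1 (sq_nonneg (η ^ α))
      _ = η ^ (2 * α - 1) := e1
      _ = η ^ α * η ^ (α - 1) := e2.symm
  have hηr : η * η ^ (α - 1) = η ^ α := by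
    nth_rewrite 1 [← Real.rpow_one η]
    rw [← Real.rpow_add hηpos]
    congr 1
    ring
  -- measurability / integrability toolkit
  have hvL2 : ∀ k, MemLp (v k) 2 P := fun k =>
    (memLp_two_iff_integrable_sq_norm
      ((hvm k).mono (F.le _)).aestronglyMeasurable).mpr (hv2int k)
  have hgmeas : ∀ k, StronglyMeasurable[F k] (fun ω => gradient L (x k ω)) := fun k =>
    hgradcont.comp_stronglyMeasurable (hxm k)
  have hΦbase : (1:ℝ) ≤ 1 + c0 * η := by nlinarith only [hc0, hηpos]
  intro k
  induction k with
  | zero =>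
      have hx0' : x 0 = fun _ => x0 := funext hx0
      have hm0L2 : MemLp (m 0) 2 P :=
        (memLp_two_iff_integrable_sq_norm
          ((hmm 0).mono (F.le 0)).aestronglyMeasurable).mpr hm0int
      refine ⟨by rw [hx0']; exact memLp_const x0, hm0L2, ?_, ?_, ?_⟩
      · have h0 : (0:ℝ) ≤ ∫ ω, ‖m 0 ω‖ ^ 2 ∂P := integral_nonneg fun ω => by positivity
        simp only [pow_zero, mul_one]
        calc ∫ ω, ‖m 0 ω‖ ^ 2 ∂P ≤ cA := hA0
          _ ≤ cA * η ^ (α - 1) := le_mul_of_one_le_right hcA hr1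
      · simp only [hx0', pow_zero, mul_one]
        have : ∀ ω : Ω, (inner ℝ ((fun _ => x0) ω - x0) (m 0 ω) : ℝ) = 0 := by
          intro ω
          simp
        simp only [this, integral_zero, abs_zero]
        exact hcC
      · simp [hx0']
  | succ k ih =>
      obtain ⟨hxL2, hmL2, hA, hC, hB⟩ := ih
      set Φ : ℝ := (1 + c0 * η) ^ k with hΦdef
      have hΦ1 : (1:ℝ) ≤ Φ := one_le_pow₀ hΦbase
      have hΦpos : (0:ℝ) < Φ := by linarith only [hΦ1]
      obtain ⟨⟨hβ0, hβ1⟩, hβlo, hβhi⟩ := hβk k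
      obtain ⟨hηk0, hηk1⟩ := hηk k
      set u : Ω → EuclideanSpace ℝ (Fin d) := fun ω => x k ω - x0 with hudef
      set a : Ω → EuclideanSpace ℝ (Fin d) :=
        fun ω => βk k • m k ω + (1 - βk k) • gradient L (x k ω) with hadef
      set c : ℝ := (1 - βk k) * σ with hcdef
      have huL2 : MemLp u 2 P := hxL2.sub (memLp_const x0)
      have huM : StronglyMeasurable[F k] u :=
        (hxm k).sub stronglyMeasurable_const
      have hBnn : (0:ℝ) ≤ ∫ ω, ‖u ω‖ ^ 2 ∂P := integral_nonneg fun ω => by positivity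
      have hAnn : (0:ℝ) ≤ ∫ ω, ‖m k ω‖ ^ 2 ∂P := integral_nonneg fun ω => by positivity
      have hu2int : Integrable (fun ω => ‖u ω‖ ^ 2) P := sq_norm_integrable huL2
      have hBΦ2 : 1 + (∫ ω, ‖u ω‖ ^ 2 ∂P) ≤ Φ := by linarith only [hB]
      -- L² of gradient term
      have hGmeasAE : AEStronglyMeasurable (fun ω => gradient L (x k ω)) P :=
        ((hgmeas k).mono (F.le k)).aestronglyMeasurable
      have hGdomint : Integrable (fun ω => cG * (1 + ‖u ω‖ ^ 2)) P :=
        ((integrable_const (1:ℝ)).add hu2int).const_mul cG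
      have hGL2 : MemLp (fun ω => gradient L (x k ω)) 2 P := by
        refine (memLp_two_iff_integrable_sq_norm hGmeasAE).mpr ?_
        refine hGdomint.mono' ?_ ?_
        · exact (continuous_norm.pow 2).comp_aestronglyMeasurable hGmeasAE
        · filter_upwards with ω
          rw [Real.norm_eq_abs, abs_of_nonneg (by positivity)]
          exact hgb (x k ω)
      have hG2int : Integrable (fun ω => ‖gradient L (x k ω)‖ ^ 2) P :=
        sq_norm_integrable hGL2
      have hG2bd : ∫ ω, ‖gradient L (x k ω)‖ ^ 2 ∂P
          ≤ cG * (1 + ∫ ω, ‖u ω‖ ^ 2 ∂P) := by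
        calc ∫ ω, ‖gradient L (x k ω)‖ ^ 2 ∂P
            ≤ ∫ ω, cG * (1 + ‖u ω‖ ^ 2) ∂P :=
              integral_mono hG2int hGdomint fun ω => hgb (x k ω)
          _ = cG * (1 + ∫ ω, ‖u ω‖ ^ 2 ∂P) := by
              rw [integral_const_mul, integral_add (integrable_const _) hu2int]
              simp
      -- second moment of noise
      have hx1pL2 : MemLp (fun ω => 1 + ‖x k ω‖) 2 P :=
        (memLp_const (1:ℝ)).add hxL2.norm
      have hvdomint : Integrable (fun ω => (C2 1 * (1 + ‖x k ω‖)) ^ 2) P := by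
        have h1 : Integrable (fun ω => (1 + ‖x k ω‖) ^ 2) P := hx1pL2.integrable_sq
        have := h1.const_mul ((C2 1) ^ 2)
        refine this.congr ?_
        filter_upwards with ω
        ring
      have hvdomint2 : Integrable (fun ω => cS * (1 + ‖u ω‖ ^ 2)) P :=
        ((integrable_const (1:ℝ)).add hu2int).const_mul cS
      have hS : ∫ ω, ‖v k ω‖ ^ 2 ∂P ≤ cS * (1 + ∫ ω, ‖u ω‖ ^ 2 ∂P) := by
        haveI : SigmaFinite (P.trim (F.le k)) := by infer_instance
        calc ∫ ω, ‖v k ω‖ ^ 2 ∂P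
            = ∫ ω, (P[fun ω' => ‖v k ω'‖ ^ 2|F k]) ω ∂P :=
              (integral_condExp (F.le k)).symm
          _ ≤ ∫ ω, (C2 1 * (1 + ‖x k ω‖)) ^ 2 ∂P :=
              integral_mono_ae integrable_condExp hvdomint (hv2bd k)
          _ ≤ ∫ ω, cS * (1 + ‖u ω‖ ^ 2) ∂P :=
              integral_mono hvdomint hvdomint2 fun ω => hsb (x k ω)
          _ = cS * (1 + ∫ ω, ‖u ω‖ ^ 2 ∂P) := by
              rw [integral_const_mul, integral_add (integrable_const _) hu2int]
              simp
      have hSnn : (0:ℝ) ≤ ∫ ω, ‖v k ω‖ ^ 2 ∂P := integral_nonneg fun ω => by positivity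
      -- L² and measurability of a
      have haM : StronglyMeasurable[F k] a :=
        ((hmm k).const_smul (βk k)).add ((hgmeas k).const_smul (1 - βk k))
      have haL2 : MemLp a 2 P := (hmL2.const_smul (βk k)).add (hGL2.const_smul (1 - βk k))
      have hmfun : m (k + 1) = fun ω => a ω + c • v k ω := by
        funext ω
        rw [hmrec k ω]
        simp only [hadef, hcdef, smul_add, smul_smul, add_assoc]
      have hm1L2 : MemLp (m (k + 1)) 2 P := by
        rw [hmfun]
        exact haL2.add ((hvL2 k).const_smul c)
      have hm12int : Integrable (fun ω => ‖m (k + 1) ω‖ ^ 2) P := sq_norm_integrable hm1L2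
      have hA1nn : (0:ℝ) ≤ ∫ ω, ‖m (k + 1) ω‖ ^ 2 ∂P :=
        integral_nonneg fun ω => by positivity
      -- A identity
      have hZa : ∫ ω, (inner ℝ (a ω) (v k ω) : ℝ) ∂P = 0 :=
        integral_inner_noise_zero F k haM haL2 (hvL2 k) (hv0 k)
      have hA1eq : ∫ ω, ‖m (k + 1) ω‖ ^ 2 ∂P
          = (∫ ω, ‖a ω‖ ^ 2 ∂P) + c ^ 2 * ∫ ω, ‖v k ω‖ ^ 2 ∂P := by
        have hpt : ∀ ω, ‖m (k + 1) ω‖ ^ 2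
            = ‖a ω‖ ^ 2 + 2 * (c * (inner ℝ (a ω) (v k ω) : ℝ)) + c ^ 2 * ‖v k ω‖ ^ 2 := by
          intro ω
          rw [hmfun]
          have h := norm_add_sq_real (a ω) (c • v k ω)
          rw [real_inner_smul_right, norm_smul] at h
          simp only [Real.norm_eq_abs] at h
          rw [h, mul_pow, sq_abs]
        have i1 : Integrable (fun ω => ‖a ω‖ ^ 2) P := sq_norm_integrable haL2
        have i2 : Integrable (fun ω => 2 * (c * (inner ℝ (a ω) (v k ω) : ℝ))) P :=
          ((inner_integrable haL2 (hvL2 k)).const_mul c).const_mul 2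
        have i3 : Integrable (fun ω => c ^ 2 * ‖v k ω‖ ^ 2) P := (hv2int k).const_mul _
        calc ∫ ω, ‖m (k + 1) ω‖ ^ 2 ∂P
            = ∫ ω, (‖a ω‖ ^ 2 + 2 * (c * (inner ℝ (a ω) (v k ω) : ℝ))
                + c ^ 2 * ‖v k ω‖ ^ 2) ∂P := by
              exact integral_congr_ae (Filter.Eventually.of_forall fun ω => hpt ω)
          _ = (∫ ω, ‖a ω‖ ^ 2 ∂P) + (∫ ω, 2 * (c * (inner ℝ (a ω) (v k ω) : ℝ)) ∂P)
                + ∫ ω, c ^ 2 * ‖v k ω‖ ^ 2 ∂P := by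
              have h1 := integral_add (i1.add i2) i3
              have h2 := integral_add i1 i2
              simp only [Pi.add_apply] at h1
              rw [h1, h2]
          _ = (∫ ω, ‖a ω‖ ^ 2 ∂P) + c ^ 2 * ∫ ω, ‖v k ω‖ ^ 2 ∂P := by
              simp only [integral_const_mul]
              rw [hZa]
              ring
      -- bound on ∫‖a‖²
      have haint : Integrable (fun ω => ‖a ω‖ ^ 2) P := sq_norm_integrable haL2
      have ha2 : ∫ ω, ‖a ω‖ ^ 2 ∂P
          ≤ βk k * (∫ ω, ‖m k ω‖ ^ 2 ∂P)
            + (1 - βk k) * ∫ ω, ‖gradient L (x k ω)‖ ^ 2 ∂P := by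
        calc ∫ ω, ‖a ω‖ ^ 2 ∂P
            ≤ ∫ ω, (βk k * ‖m k ω‖ ^ 2
                + (1 - βk k) * ‖gradient L (x k ω)‖ ^ 2) ∂P := by
              refine integral_mono haint
                (((sq_norm_integrable hmL2).const_mul _).add (hG2int.const_mul _)) ?_
              intro ω
              exact norm_combo_sq_le hβ0.le hβ1.le _ _
          _ = βk k * (∫ ω, ‖m k ω‖ ^ 2 ∂P)
                + (1 - βk k) * ∫ ω, ‖gradient L (x k ω)‖ ^ 2 ∂P := by
              have h1 := integral_add ((sq_norm_integrable hmL2).const_mul (βk k))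
                (hG2int.const_mul (1 - βk k))
              rw [h1, integral_const_mul, integral_const_mul]
      -- the key A bound
      have hA1 : ∫ ω, ‖m (k + 1) ω‖ ^ 2 ∂P ≤ cA * η ^ (α - 1) * Φ := by
        have hc2 : c ^ 2 ≤ lmax ^ 2 * (η ^ α) ^ 2 * σ ^ 2 := by
          have hb1 : (0:ℝ) ≤ 1 - βk k := by linarith only [hβ1]
          have h1 : (1 - βk k) ^ 2 ≤ (lmax * η ^ α) ^ 2 := by
            nlinarith only [hb1, hβhi, mul_pos hlmaxpos hppos]
          have h2 : (0:ℝ) ≤ σ ^ 2 := sq_nonneg σ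
          rw [hcdef, mul_pow]
          calc (1 - βk k) ^ 2 * σ ^ 2 ≤ (lmax * η ^ α) ^ 2 * σ ^ 2 :=
              mul_le_mul_of_nonneg_right h1 h2
            _ = lmax ^ 2 * (η ^ α) ^ 2 * σ ^ 2 := by ring
        have hBk := hB
        have hAk := hA
        have hBΦ : 1 + (∫ ω, ‖u ω‖ ^ 2 ∂P) ≤ Φ := by linarith only [hB]
        have hgrc : ∫ ω, ‖gradient L (x k ω)‖ ^ 2 ∂P ≤ cG * Φ :=
          hG2bd.trans (mul_le_mul_of_nonneg_left hBΦ hcG)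
        have hSc : ∫ ω, ‖v k ω‖ ^ 2 ∂P ≤ cS * Φ :=
          hS.trans (mul_le_mul_of_nonneg_left hBΦ hcS)
        rw [hA1eq]
        have t1 : βk k * (∫ ω, ‖m k ω‖ ^ 2 ∂P)
            ≤ (1 - lmin * η ^ α) * (cA * η ^ (α - 1) * Φ) := by
          have hβle : βk k ≤ 1 - lmin * η ^ α := by linarith only [hβlo]
          have hpos : (0:ℝ) ≤ cA * η ^ (α - 1) * Φ := by positivity
          exact (mul_le_mul_of_nonneg_left hAk hβ0.le).trans
            (mul_le_mul_of_nonneg_right hβle hpos)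
        have t2 : (1 - βk k) * (∫ ω, ‖gradient L (x k ω)‖ ^ 2 ∂P)
            ≤ lmax * η ^ α * (cG * Φ) := by
          have h1 : (0:ℝ) ≤ 1 - βk k := by linarith only [hβ1]
          exact (mul_le_mul_of_nonneg_left hgrc h1).trans
            (mul_le_mul_of_nonneg_right hβhi (mul_nonneg hcG hΦpos.le))
        have t3 : c ^ 2 * (∫ ω, ‖v k ω‖ ^ 2 ∂P)
            ≤ lmax ^ 2 * (η ^ α * η ^ (α - 1)) * (cS * Φ) := by
          have h3 : (0:ℝ) ≤ cS * Φ := mul_nonneg hcS hΦpos.le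
          have h1 : c ^ 2 * (∫ ω, ‖v k ω‖ ^ 2 ∂P) ≤ c ^ 2 * (cS * Φ) :=
            mul_le_mul_of_nonneg_left hSc (sq_nonneg c)
          have h2 : c ^ 2 * (cS * Φ) ≤ (lmax ^ 2 * (η ^ α) ^ 2 * σ ^ 2) * (cS * Φ) :=
            mul_le_mul_of_nonneg_right hc2 h3
          have h4 : lmax ^ 2 * (η ^ α) ^ 2 * σ ^ 2
              ≤ lmax ^ 2 * (η ^ α * η ^ (α - 1)) := by
            nlinarith only [hσsq', sq_nonneg lmax]
          have h5 : (lmax ^ 2 * (η ^ α) ^ 2 * σ ^ 2) * (cS * Φ)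
              ≤ lmax ^ 2 * (η ^ α * η ^ (α - 1)) * (cS * Φ) :=
            mul_le_mul_of_nonneg_right h4 h3
          linarith only [h1, h2, h5]
        have hfin : (1 - lmin * η ^ α) * (cA * η ^ (α - 1) * Φ)
            + lmax * η ^ α * (cG * Φ) + lmax ^ 2 * (η ^ α * η ^ (α - 1)) * (cS * Φ)
            ≤ cA * η ^ (α - 1) * Φ := by
          have key : lmax * cG + lmax ^ 2 * cS * η ^ (α - 1) ≤ lmin * cA * η ^ (α - 1) := by
            nlinarith only [hAstep, hr1, hrpos, mul_le_mul_of_nonneg_right hAstep hrpos.le,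
              mul_nonneg (mul_nonneg hlmaxpos.le hcG) (sub_nonneg.mpr hr1)]
          nlinarith only [mul_le_mul_of_nonneg_right key (mul_pos hppos hΦpos).le]
        calc (∫ ω, ‖a ω‖ ^ 2 ∂P) + c ^ 2 * ∫ ω, ‖v k ω‖ ^ 2 ∂P
            ≤ (βk k * (∫ ω, ‖m k ω‖ ^ 2 ∂P)
                + (1 - βk k) * ∫ ω, ‖gradient L (x k ω)‖ ^ 2 ∂P)
              + c ^ 2 * ∫ ω, ‖v k ω‖ ^ 2 ∂P := by linarith only [ha2]
          _ ≤ (1 - lmin * η ^ α) * (cA * η ^ (α - 1) * Φ)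
              + lmax * η ^ α * (cG * Φ)
              + lmax ^ 2 * (η ^ α * η ^ (α - 1)) * (cS * Φ) := by
                linarith only [t1, t2, t3]
          _ ≤ cA * η ^ (α - 1) * Φ := hfin
      -- x_{k+1} - x0
      have hwfun : ∀ ω, x (k + 1) ω - x0 = u ω - ηk k • m (k + 1) ω := by
        intro ω
        rw [hxrec k ω]
        simp only [hudef]
        abel
      -- integrability of inner products
      have hum_int : Integrable (fun ω => (inner ℝ (u ω) (m (k + 1) ω) : ℝ)) P :=
        inner_integrable huL2 hm1L2
      have hukm_int : Integrable (fun ω => (inner ℝ (u ω) (m k ω) : ℝ)) P :=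
        inner_integrable huL2 hmL2
      have huG_int : Integrable (fun ω => (inner ℝ (u ω) (gradient L (x k ω)) : ℝ)) P :=
        inner_integrable huL2 hGL2
      have huv_int : Integrable (fun ω => (inner ℝ (u ω) (v k ω) : ℝ)) P :=
        inner_integrable huL2 (hvL2 k)
      have hZu : ∫ ω, (inner ℝ (u ω) (v k ω) : ℝ) ∂P = 0 :=
        integral_inner_noise_zero F k huM huL2 (hvL2 k) (hv0 k)
      -- decomposition of ∫⟪u, m_{k+1}⟫
      have hum : ∫ ω, (inner ℝ (u ω) (m (k + 1) ω) : ℝ) ∂P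
          = βk k * (∫ ω, (inner ℝ (u ω) (m k ω) : ℝ) ∂P)
            + (1 - βk k) * ∫ ω, (inner ℝ (u ω) (gradient L (x k ω)) : ℝ) ∂P := by
        have hpt : ∀ ω, (inner ℝ (u ω) (m (k + 1) ω) : ℝ)
            = βk k * (inner ℝ (u ω) (m k ω) : ℝ)
              + (1 - βk k) * (inner ℝ (u ω) (gradient L (x k ω)) : ℝ)
              + c * (inner ℝ (u ω) (v k ω) : ℝ) := by
          intro ω
          rw [hmfun]
          simp only [hadef]
          rw [inner_add_right, inner_add_right, real_inner_smul_right,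
            real_inner_smul_right, real_inner_smul_right]
        have i1 : Integrable (fun ω => βk k * (inner ℝ (u ω) (m k ω) : ℝ)) P :=
          hukm_int.const_mul _
        have i2 : Integrable
            (fun ω => (1 - βk k) * (inner ℝ (u ω) (gradient L (x k ω)) : ℝ)) P :=
          huG_int.const_mul _
        have i3 : Integrable (fun ω => c * (inner ℝ (u ω) (v k ω) : ℝ)) P :=
          huv_int.const_mul _
        calc ∫ ω, (inner ℝ (u ω) (m (k + 1) ω) : ℝ) ∂P
            = ∫ ω, (βk k * (inner ℝ (u ω) (m k ω) : ℝ)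
                + (1 - βk k) * (inner ℝ (u ω) (gradient L (x k ω)) : ℝ)
                + c * (inner ℝ (u ω) (v k ω) : ℝ)) ∂P :=
              integral_congr_ae (Filter.Eventually.of_forall hpt)
          _ = (∫ ω, βk k * (inner ℝ (u ω) (m k ω) : ℝ) ∂P)
              + (∫ ω, (1 - βk k) * (inner ℝ (u ω) (gradient L (x k ω)) : ℝ) ∂P)
              + ∫ ω, c * (inner ℝ (u ω) (v k ω) : ℝ) ∂P := by
              have h1 := integral_add (i1.add i2) i3
              have h2 := integral_add i1 i2
              simp only [Pi.add_apply] at h1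
              rw [h1, h2]
          _ = βk k * (∫ ω, (inner ℝ (u ω) (m k ω) : ℝ) ∂P)
              + (1 - βk k) * ∫ ω, (inner ℝ (u ω) (gradient L (x k ω)) : ℝ) ∂P := by
              simp only [integral_const_mul]
              rw [hZu]
              ring
      -- bound on the gradient cross term
      have hIbd : |∫ ω, (inner ℝ (u ω) (gradient L (x k ω)) : ℝ) ∂P|
          ≤ cX * (1 + ∫ ω, ‖u ω‖ ^ 2 ∂P) := by
        have hdom : Integrable
            (fun ω => (1:ℝ)/2 * ‖u ω‖ ^ 2 + 1/2 * ‖gradient L (x k ω)‖ ^ 2) P :=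
          (hu2int.const_mul _).add (hG2int.const_mul _)
        have habs : |∫ ω, (inner ℝ (u ω) (gradient L (x k ω)) : ℝ) ∂P|
            ≤ ∫ ω, |(inner ℝ (u ω) (gradient L (x k ω)) : ℝ)| ∂P := by
          have := norm_integral_le_integral_norm
            (fun ω => (inner ℝ (u ω) (gradient L (x k ω)) : ℝ)) (μ := P)
          simpa [Real.norm_eq_abs] using this
        have hmono : ∫ ω, |(inner ℝ (u ω) (gradient L (x k ω)) : ℝ)| ∂P
            ≤ ∫ ω, ((1:ℝ)/2 * ‖u ω‖ ^ 2 + 1/2 * ‖gradient L (x k ω)‖ ^ 2) ∂P := by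
          refine integral_mono huG_int.abs hdom fun ω => ?_
          have h1 := abs_real_inner_le_norm (u ω) (gradient L (x k ω))
          nlinarith only [h1, sq_nonneg (‖u ω‖ - ‖gradient L (x k ω)‖),
            norm_nonneg (u ω), norm_nonneg (gradient L (x k ω))]
        have heval : ∫ ω, ((1:ℝ)/2 * ‖u ω‖ ^ 2 + 1/2 * ‖gradient L (x k ω)‖ ^ 2) ∂P
            = 1/2 * (∫ ω, ‖u ω‖ ^ 2 ∂P)
              + 1/2 * ∫ ω, ‖gradient L (x k ω)‖ ^ 2 ∂P := by
          have h1 := integral_add (hu2int.const_mul ((1:ℝ)/2)) (hG2int.const_mul ((1:ℝ)/2))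
          rw [h1, integral_const_mul, integral_const_mul]
        have hfin : 1/2 * (∫ ω, ‖u ω‖ ^ 2 ∂P)
              + 1/2 * (∫ ω, ‖gradient L (x k ω)‖ ^ 2 ∂P)
            ≤ cX * (1 + ∫ ω, ‖u ω‖ ^ 2 ∂P) := by
          nlinarith only [hxX, hBnn, hG2bd,
            mul_nonneg (show (0:ℝ) ≤ 2 * cX - 1 - cG by linarith only [hxX]) hBnn]
        linarith only [habs, hmono, heval ▸ hmono, hfin, heval.le, heval.ge]
      -- C identity at k+1
      have hC1eq : ∫ ω, (inner ℝ (x (k + 1) ω - x0) (m (k + 1) ω) : ℝ) ∂P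
          = (∫ ω, (inner ℝ (u ω) (m (k + 1) ω) : ℝ) ∂P)
            - ηk k * ∫ ω, ‖m (k + 1) ω‖ ^ 2 ∂P := by
        have hpt : ∀ ω, (inner ℝ (x (k + 1) ω - x0) (m (k + 1) ω) : ℝ)
            = (inner ℝ (u ω) (m (k + 1) ω) : ℝ) - ηk k * ‖m (k + 1) ω‖ ^ 2 := by
          intro ω
          rw [hwfun ω, inner_sub_left, real_inner_smul_left,
            real_inner_self_eq_norm_sq]
        calc ∫ ω, (inner ℝ (x (k + 1) ω - x0) (m (k + 1) ω) : ℝ) ∂P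
            = ∫ ω, ((inner ℝ (u ω) (m (k + 1) ω) : ℝ) - ηk k * ‖m (k + 1) ω‖ ^ 2) ∂P :=
              integral_congr_ae (Filter.Eventually.of_forall hpt)
          _ = (∫ ω, (inner ℝ (u ω) (m (k + 1) ω) : ℝ) ∂P)
              - ηk k * ∫ ω, ‖m (k + 1) ω‖ ^ 2 ∂P := by
              rw [integral_sub hum_int (hm12int.const_mul _), integral_const_mul]
      -- B identity at k+1
      have hB1eq : ∫ ω, ‖x (k + 1) ω - x0‖ ^ 2 ∂P
          = (∫ ω, ‖u ω‖ ^ 2 ∂P)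
            - 2 * (ηk k * ∫ ω, (inner ℝ (u ω) (m (k + 1) ω) : ℝ) ∂P)
            + (ηk k) ^ 2 * ∫ ω, ‖m (k + 1) ω‖ ^ 2 ∂P := by
        have hpt : ∀ ω, ‖x (k + 1) ω - x0‖ ^ 2
            = ‖u ω‖ ^ 2 - 2 * (ηk k * (inner ℝ (u ω) (m (k + 1) ω) : ℝ))
              + (ηk k) ^ 2 * ‖m (k + 1) ω‖ ^ 2 := by
          intro ω
          rw [hwfun ω]
          have h := norm_sub_sq_real (u ω) (ηk k • m (k + 1) ω)
          rw [real_inner_smul_right, norm_smul] at h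
          simp only [Real.norm_eq_abs] at h
          rw [h, mul_pow, sq_abs]
        have i1 : Integrable
            (fun ω => ‖u ω‖ ^ 2 - 2 * (ηk k * (inner ℝ (u ω) (m (k + 1) ω) : ℝ))) P :=
          hu2int.sub ((hum_int.const_mul _).const_mul _)
        calc ∫ ω, ‖x (k + 1) ω - x0‖ ^ 2 ∂P
            = ∫ ω, (‖u ω‖ ^ 2 - 2 * (ηk k * (inner ℝ (u ω) (m (k + 1) ω) : ℝ))
                + (ηk k) ^ 2 * ‖m (k + 1) ω‖ ^ 2) ∂P :=
              integral_congr_ae (Filter.Eventually.of_forall hpt)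
          _ = (∫ ω, ‖u ω‖ ^ 2 ∂P)
              - 2 * (ηk k * ∫ ω, (inner ℝ (u ω) (m (k + 1) ω) : ℝ) ∂P)
              + (ηk k) ^ 2 * ∫ ω, ‖m (k + 1) ω‖ ^ 2 ∂P := by
              rw [integral_add i1 (hm12int.const_mul _),
                integral_sub hu2int ((hum_int.const_mul _).const_mul _)]
              simp only [integral_const_mul]
      -- abs bound on ∫⟪u, m_{k+1}⟫
      have humabs : |∫ ω, (inner ℝ (u ω) (m (k + 1) ω) : ℝ) ∂P|
          ≤ βk k * |∫ ω, (inner ℝ (u ω) (m k ω) : ℝ) ∂P|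
            + (1 - βk k) * |∫ ω, (inner ℝ (u ω) (gradient L (x k ω)) : ℝ) ∂P| := by
        rw [hum]
        calc |βk k * (∫ ω, (inner ℝ (u ω) (m k ω) : ℝ) ∂P)
              + (1 - βk k) * ∫ ω, (inner ℝ (u ω) (gradient L (x k ω)) : ℝ) ∂P|
            ≤ |βk k * ∫ ω, (inner ℝ (u ω) (m k ω) : ℝ) ∂P|
              + |(1 - βk k) * ∫ ω, (inner ℝ (u ω) (gradient L (x k ω)) : ℝ) ∂P| :=
              abs_add_le _ _
          _ = βk k * |∫ ω, (inner ℝ (u ω) (m k ω) : ℝ) ∂P|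
              + (1 - βk k) * |∫ ω, (inner ℝ (u ω) (gradient L (x k ω)) : ℝ) ∂P| := by
              rw [abs_mul, abs_mul, abs_of_pos hβ0,
                abs_of_pos (show (0:ℝ) < 1 - βk k by linarith only [hβ1])]
      have hIΦ : |∫ ω, (inner ℝ (u ω) (gradient L (x k ω)) : ℝ) ∂P| ≤ cX * Φ :=
        hIbd.trans (mul_le_mul_of_nonneg_left hBΦ2 hcX)
      -- bound pieces
      have humbd : |∫ ω, (inner ℝ (u ω) (m (k + 1) ω) : ℝ) ∂P|
          ≤ (1 - lmin * η ^ α) * (cC * Φ) + lmax * η ^ α * (cX * Φ) := by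
        have hβle : βk k ≤ 1 - lmin * η ^ α := by linarith only [hβlo]
        have h1 : βk k * |∫ ω, (inner ℝ (u ω) (m k ω) : ℝ) ∂P|
            ≤ (1 - lmin * η ^ α) * (cC * Φ) :=
          (mul_le_mul_of_nonneg_left hC hβ0.le).trans
            (mul_le_mul_of_nonneg_right hβle
              (mul_nonneg hcC hΦpos.le))
        have h2 : (1 - βk k) * |∫ ω, (inner ℝ (u ω) (gradient L (x k ω)) : ℝ) ∂P|
            ≤ lmax * η ^ α * (cX * Φ) :=
          (mul_le_mul_of_nonneg_left hIΦ
            (by linarith only [hβ1] : (0:ℝ) ≤ 1 - βk k)).trans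
            (mul_le_mul_of_nonneg_right hβhi (mul_nonneg hcX hΦpos.le))
        linarith only [humabs, h1, h2]
      have hηA1 : ηk k * (∫ ω, ‖m (k + 1) ω‖ ^ 2 ∂P) ≤ ηmax * η ^ α * (cA * Φ) := by
        have h1 : ηk k * (∫ ω, ‖m (k + 1) ω‖ ^ 2 ∂P)
            ≤ (ηmax * η) * (cA * η ^ (α - 1) * Φ) :=
          (mul_le_mul_of_nonneg_left hA1 hηk0).trans
            (mul_le_mul_of_nonneg_right hηk1
              (by positivity))
        have h2 : (ηmax * η) * (cA * η ^ (α - 1) * Φ) = ηmax * η ^ α * (cA * Φ) := by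
          rw [← hηr]
          ring
        linarith only [h1, h2.le, h2.ge]
      -- conclusion pieces
      have hc0η : (0:ℝ) ≤ c0 * η := by positivity
      have hΦsucc : (1 + c0 * η) ^ (k + 1) = Φ * (1 + c0 * η) := by
        rw [pow_succ, hΦdef]
      refine ⟨?_, hm1L2, ?_, ?_, ?_⟩
      · have hxfun : x (k + 1) = fun ω => x k ω - ηk k • m (k + 1) ω :=
          funext (hxrec k)
        rw [hxfun]
        exact hxL2.sub (hm1L2.const_smul (ηk k))
      · -- A invariant
        refine hA1.trans ?_
        rw [hΦsucc]
        have : cA * η ^ (α - 1) * Φ * 1 ≤ cA * η ^ (α - 1) * Φ * (1 + c0 * η) := by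
          refine mul_le_mul_of_nonneg_left (by linarith only [hc0η]) (by positivity)
        calc cA * η ^ (α - 1) * Φ = cA * η ^ (α - 1) * Φ * 1 := by ring
          _ ≤ cA * η ^ (α - 1) * Φ * (1 + c0 * η) := this
          _ = cA * η ^ (α - 1) * (Φ * (1 + c0 * η)) := by ring
      · -- C invariant
        rw [hC1eq, hΦsucc]
        have habs2 : |(∫ ω, (inner ℝ (u ω) (m (k + 1) ω) : ℝ) ∂P)
            - ηk k * ∫ ω, ‖m (k + 1) ω‖ ^ 2 ∂P|
            ≤ |∫ ω, (inner ℝ (u ω) (m (k + 1) ω) : ℝ) ∂P|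
              + ηk k * ∫ ω, ‖m (k + 1) ω‖ ^ 2 ∂P := by
          have h1 := abs_sub (∫ ω, (inner ℝ (u ω) (m (k + 1) ω) : ℝ) ∂P)
            (ηk k * ∫ ω, ‖m (k + 1) ω‖ ^ 2 ∂P)
          have h2 : |ηk k * ∫ ω, ‖m (k + 1) ω‖ ^ 2 ∂P|
              = ηk k * ∫ ω, ‖m (k + 1) ω‖ ^ 2 ∂P :=
            abs_of_nonneg (mul_nonneg hηk0 hA1nn)
          calc |(∫ ω, (inner ℝ (u ω) (m (k + 1) ω) : ℝ) ∂P)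
              - ηk k * ∫ ω, ‖m (k + 1) ω‖ ^ 2 ∂P|
              ≤ |∫ ω, (inner ℝ (u ω) (m (k + 1) ω) : ℝ) ∂P|
                + |ηk k * ∫ ω, ‖m (k + 1) ω‖ ^ 2 ∂P| := abs_sub _ _
            _ = |∫ ω, (inner ℝ (u ω) (m (k + 1) ω) : ℝ) ∂P|
                + ηk k * ∫ ω, ‖m (k + 1) ω‖ ^ 2 ∂P := by rw [h2]
        have hstep : (1 - lmin * η ^ α) * (cC * Φ) + lmax * η ^ α * (cX * Φ)
            + ηmax * η ^ α * (cA * Φ) ≤ cC * Φ := by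
          have key := mul_le_mul_of_nonneg_right hCstep
            (mul_pos hppos hΦpos).le
          nlinarith only [key]
        have hfinal : cC * Φ ≤ cC * (Φ * (1 + c0 * η)) := by
          have : Φ * 1 ≤ Φ * (1 + c0 * η) :=
            mul_le_mul_of_nonneg_left (by linarith only [hc0η]) hΦpos.le
          nlinarith only [this, hcC]
        calc |(∫ ω, (inner ℝ (u ω) (m (k + 1) ω) : ℝ) ∂P)
            - ηk k * ∫ ω, ‖m (k + 1) ω‖ ^ 2 ∂P|
            ≤ |∫ ω, (inner ℝ (u ω) (m (k + 1) ω) : ℝ) ∂P|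
              + ηk k * ∫ ω, ‖m (k + 1) ω‖ ^ 2 ∂P := habs2
          _ ≤ ((1 - lmin * η ^ α) * (cC * Φ) + lmax * η ^ α * (cX * Φ))
              + ηmax * η ^ α * (cA * Φ) := by linarith only [humbd, hηA1]
          _ ≤ cC * Φ := hstep
          _ ≤ cC * (Φ * (1 + c0 * η)) := hfinal
      · -- B invariant
        rw [hB1eq, hΦsucc]
        have h1 : -(2 * (ηk k * ∫ ω, (inner ℝ (u ω) (m (k + 1) ω) : ℝ) ∂P))
            ≤ 2 * (ηmax * η * ((cC + lmax * cX) * Φ)) := by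
          have ha : |∫ ω, (inner ℝ (u ω) (m (k + 1) ω) : ℝ) ∂P| ≤ (cC + lmax * cX) * Φ := by
            have hb : (1 - lmin * η ^ α) * (cC * Φ) ≤ cC * Φ := by
              nlinarith only [mul_nonneg (mul_nonneg hlminpos.le hppos.le)
                (mul_nonneg hcC hΦpos.le)]
            have hc' : lmax * η ^ α * (cX * Φ) ≤ lmax * cX * Φ := by
              nlinarith only [mul_nonneg (mul_nonneg (mul_nonneg hlmaxpos.le hcX) hΦpos.le)
                (sub_nonneg.mpr hp1)]
            linarith only [humbd, hb, hc']
          have hd : ηk k * |∫ ω, (inner ℝ (u ω) (m (k + 1) ω) : ℝ) ∂P|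
              ≤ (ηmax * η) * ((cC + lmax * cX) * Φ) := by
            refine (mul_le_mul_of_nonneg_left ha hηk0).trans ?_
            refine mul_le_mul_of_nonneg_right hηk1 ?_
            positivity
          have he : -(ηk k * ∫ ω, (inner ℝ (u ω) (m (k + 1) ω) : ℝ) ∂P)
              ≤ ηk k * |∫ ω, (inner ℝ (u ω) (m (k + 1) ω) : ℝ) ∂P| := by
            have := neg_abs_le (∫ ω, (inner ℝ (u ω) (m (k + 1) ω) : ℝ) ∂P)
            nlinarith only [this, hηk0, abs_nonneg (∫ ω, (inner ℝ (u ω) (m (k + 1) ω) : ℝ) ∂P)]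
          linarith only [hd, he]
        have h2 : (ηk k) ^ 2 * (∫ ω, ‖m (k + 1) ω‖ ^ 2 ∂P)
            ≤ ηmax ^ 2 * cA * (η * Φ) := by
          have ha : (ηk k) ^ 2 * (∫ ω, ‖m (k + 1) ω‖ ^ 2 ∂P)
              ≤ (ηmax * η) ^ 2 * (cA * η ^ (α - 1) * Φ) := by
            have hsq : (ηk k) ^ 2 ≤ (ηmax * η) ^ 2 := by
              nlinarith only [hηk0, hηk1]
            have := mul_le_mul_of_nonneg_left hA1 (sq_nonneg (ηk k))
            have h2' := mul_le_mul_of_nonneg_right hsq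
              (show (0:ℝ) ≤ cA * η ^ (α - 1) * Φ by positivity)
            linarith only [this, h2']
          have hb : (ηmax * η) ^ 2 * (cA * η ^ (α - 1) * Φ)
              = ηmax ^ 2 * cA * ((η * η ^ (α - 1)) * (η * Φ)) := by ring
          have hc' : ηmax ^ 2 * cA * ((η * η ^ (α - 1)) * (η * Φ))
              ≤ ηmax ^ 2 * cA * (1 * (η * Φ)) := by
            have hηα : η * η ^ (α - 1) ≤ 1 := by rw [hηr]; exact hp1
            have : (η * η ^ (α - 1)) * (η * Φ) ≤ 1 * (η * Φ) :=
              mul_le_mul_of_nonneg_right hηα (by positivity)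
            exact mul_le_mul_of_nonneg_left this (by positivity)
          calc (ηk k) ^ 2 * (∫ ω, ‖m (k + 1) ω‖ ^ 2 ∂P)
              ≤ (ηmax * η) ^ 2 * (cA * η ^ (α - 1) * Φ) := ha
            _ = ηmax ^ 2 * cA * ((η * η ^ (α - 1)) * (η * Φ)) := hb
            _ ≤ ηmax ^ 2 * cA * (1 * (η * Φ)) := hc'
            _ = ηmax ^ 2 * cA * (η * Φ) := by ring
        have h3 : 2 * (ηmax * η * ((cC + lmax * cX) * Φ)) + ηmax ^ 2 * cA * (η * Φ)
            ≤ c0 * η * Φ := by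
          have key := mul_le_mul_of_nonneg_right h0step
            (mul_nonneg hηpos.le hΦpos.le)
          nlinarith only [key]
        calc (∫ ω, ‖u ω‖ ^ 2 ∂P)
            - 2 * (ηk k * ∫ ω, (inner ℝ (u ω) (m (k + 1) ω) : ℝ) ∂P)
            + (ηk k) ^ 2 * ∫ ω, ‖m (k + 1) ω‖ ^ 2 ∂P
            ≤ (Φ - 1) + 2 * (ηmax * η * ((cC + lmax * cX) * Φ))
              + ηmax ^ 2 * cA * (η * Φ) := by linarith only [hB, h1, h2]
          _ ≤ (Φ - 1) + c0 * η * Φ := by linarith only [h3]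
          _ = Φ * (1 + c0 * η) - 1 := by ring

end Helpers


/-- The stochastic SGDM setup: on a filtered probability space, `L` has `L_lip`-Lipschitz
gradient, `Σ` is positive semidefinite with `tr Σ(x) ≤ C_tr`, the schedule `(η_k, β_k)` is
scaled by `η` with index `α` (constants `η_max, λ_min, λ_max`), `0 < σ ≤ η^{−1/2}`, the
noise `v_k` is `𝓕_{k+1}`-measurable with `E[v_k|𝓕_k] = 0`, `E[v_k v_kᵀ|𝓕_k] = Σ(x_k)`,
and conditional moments `(E[‖v_k‖^{2m}|𝓕_k])^{1/(2m)} ≤ C_{2m}(1 + ‖x_k‖)`, and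
`m_{k+1} = β_k m_k + (1 − β_k)(∇L(x_k) + σ v_k)`, `x_{k+1} = x_k − η_k m_{k+1}`,
with `x_0` deterministic. -/
def SGDMSetup (d : ℕ) {Ω : Type} [mΩ : MeasurableSpace Ω] (P : Measure Ω)
    (F : Filtration ℕ mΩ)
    (L : EuclideanSpace ℝ (Fin d) → ℝ)
    (Sigma : EuclideanSpace ℝ (Fin d) → Matrix (Fin d) (Fin d) ℝ)
    (Llip Ctr : ℝ) (C2 : ℕ → ℝ)
    (α η ηmax lmin lmax σ : ℝ)
    (ηk βk : ℕ → ℝ) (x0 : EuclideanSpace ℝ (Fin d))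
    (x m v : ℕ → Ω → EuclideanSpace ℝ (Fin d)) : Prop :=
  Differentiable ℝ L ∧
  LipschitzWith (Real.toNNReal Llip) (fun z => gradient L z) ∧
  (∀ z, (Sigma z).PosSemidef) ∧
  (∀ z, (Sigma z).trace ≤ Ctr) ∧
  (∀ k, 0 ≤ ηk k ∧ ηk k ≤ ηmax * η) ∧
  (∀ k, βk k ∈ Set.Ioo (0 : ℝ) 1 ∧ lmin * η ^ α ≤ 1 - βk k ∧ 1 - βk k ≤ lmax * η ^ α) ∧
  (0 < σ ∧ σ ≤ η ^ (-(1 : ℝ) / 2)) ∧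
  (∀ ω, x 0 ω = x0) ∧
  (∀ k, StronglyMeasurable[F k] (x k)) ∧
  (∀ k, StronglyMeasurable[F k] (m k)) ∧
  (∀ k, StronglyMeasurable[F (k + 1)] (v k)) ∧
  (∀ k, P[fun ω => v k ω|F k] =ᵐ[P] 0) ∧
  (∀ k i j, P[fun ω => v k ω i * v k ω j|F k] =ᵐ[P] fun ω => Sigma (x k ω) i j) ∧
  (∀ k mm, 1 ≤ mm →
      Integrable (fun ω => ‖v k ω‖ ^ (2 * mm)) P ∧
      ∀ᵐ ω ∂P, (P[fun ω' => ‖v k ω'‖ ^ (2 * mm)|F k]) ω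
        ≤ (C2 mm * (1 + ‖x k ω‖)) ^ (2 * mm)) ∧
  (∀ k ω, m (k + 1) ω = βk k • m k ω + (1 - βk k) • (gradient L (x k ω) + σ • v k ω)) ∧
  (∀ k ω, x (k + 1) ω = x k ω - ηk k • m (k + 1) ω)

/-- Uniform-in-`η` gradient-norm bound over the `O(1/η)` horizon: in the stochastic SGDM
setup with index `α ∈ [0,1)` and noise scale `σ ≤ η^{−1/2}`, for fixed `T > 0` there is a
constant `f(T)`, independent of `η`, such that for all
`η < min((λ_min³/(12 L_lip λ_max² η_max))^{1/(1−α)}, 1)`,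
`sup_{0 ≤ k ≤ ⌊T/η⌋} E‖∇L(x_k)‖² ≤ f(T)`. -/
theorem stmt_14
    {d : ℕ} {Ω : Type} [mΩ : MeasurableSpace Ω] (P : Measure Ω)
    [IsProbabilityMeasure P]
    (L : EuclideanSpace ℝ (Fin d) → ℝ)
    (Sigma : EuclideanSpace ℝ (Fin d) → Matrix (Fin d) (Fin d) ℝ)
    (Llip Ctr : ℝ) (C2 : ℕ → ℝ)
    (α ηmax lmin lmax : ℝ) (x0 : EuclideanSpace ℝ (Fin d))
    (hα : 0 ≤ α) (hα1 : α < 1)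
    (hηmax : 0 < ηmax) (hlmin : 0 < lmin) (hl : lmin ≤ lmax) (hlmax : lmax < 1)
    (hLlip : 0 ≤ Llip)
    (F : ℝ → Filtration ℕ mΩ) (σf : ℝ → ℝ) (ηk βk : ℝ → ℕ → ℝ)
    (x m v : ℝ → ℕ → Ω → EuclideanSpace ℝ (Fin d))
    (hsetup : ∀ η ∈ Set.Ioc (0 : ℝ) 1,
      SGDMSetup d P (F η) L Sigma Llip Ctr C2 α η ηmax lmin lmax (σf η) (ηk η) (βk η) x0
        (x η) (m η) (v η))
    (Minit : ℝ)
    (hm0 : ∀ η ∈ Set.Ioc (0 : ℝ) 1,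
      Integrable (fun ω => ‖m η 0 ω‖ ^ 2) P ∧ ∫ ω, ‖m η 0 ω‖ ^ 2 ∂P ≤ Minit)
    (T : ℝ) (hT : 0 < T) :
    ∃ fT : ℝ, ∀ η : ℝ, 0 < η → η ≤ 1 →
      η < min ((lmin ^ 3 / (12 * Llip * lmax ^ 2 * ηmax)) ^ ((1 : ℝ) / (1 - α))) 1 →
      ∀ k ≤ ⌊T / η⌋₊, ∫ ω, ‖gradient L (x η k ω)‖ ^ 2 ∂P ≤ fT := by
  have hlmaxpos : 0 < lmax := lt_of_lt_of_le hlmin hl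
  set cG : ℝ := 2 * ‖gradient L x0‖ ^ 2 + 2 * Llip ^ 2 with hcGdef
  set cS : ℝ := 2 * (C2 1) ^ 2 * ((1 + ‖x0‖) ^ 2 + 1) with hcSdef
  set cX : ℝ := (1 + cG) / 2 with hcXdef
  set cA : ℝ := max Minit 0 + (lmax * cG + lmax ^ 2 * cS) / lmin with hcAdef
  set cC : ℝ := (lmax * cX + ηmax * cA) / lmin with hcCdef
  set c0 : ℝ := 2 * ηmax * (cC + lmax * cX) + ηmax ^ 2 * cA with hc0def
  have hcG : 0 ≤ cG := by positivity
  have hcS : 0 ≤ cS := by positivity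
  have hcX : 0 ≤ cX := by positivity
  have hcA : 0 ≤ cA := by positivity
  have hcC : 0 ≤ cC := by positivity
  have hc0 : 0 ≤ c0 := by positivity
  refine ⟨cG * Real.exp (c0 * T), ?_⟩
  intro η hη0 hη1 _ k hk
  have hmem : η ∈ Set.Ioc (0 : ℝ) 1 := ⟨hη0, hη1⟩
  obtain ⟨hdiff, hlip, hpsd, htr, hηkb, hβkb, ⟨hσ0, hσle⟩, hx00, hxmeas, hmmeas,
    hvmeas, hv0', hv2', hv3', hmrec', hxrec'⟩ := hsetup η hmem
  obtain ⟨hm0i, hm0b⟩ := hm0 η hmem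
  -- gradient pointwise bound
  have hgb : ∀ z : EuclideanSpace ℝ (Fin d),
      ‖gradient L z‖ ^ 2 ≤ cG * (1 + ‖z - x0‖ ^ 2) := by
    intro z
    have hd := hlip.dist_le_mul z x0
    rw [Real.coe_toNNReal Llip hLlip, dist_eq_norm, dist_eq_norm] at hd
    have h2 := norm_sub_norm_le (gradient L z) (gradient L x0)
    have h1 : ‖gradient L z‖ ≤ ‖gradient L x0‖ + Llip * ‖z - x0‖ := by
      linarith only [h2, hd]
    have h3 : (0:ℝ) ≤ ‖gradient L x0‖ + Llip * ‖z - x0‖ :=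
      add_nonneg (norm_nonneg _) (mul_nonneg hLlip (norm_nonneg _))
    rw [hcGdef]
    nlinarith only [h1, norm_nonneg (gradient L z), norm_nonneg (z - x0),
      norm_nonneg (gradient L x0), hLlip,
      mul_le_mul h1 h1 (norm_nonneg (gradient L z)) h3,
      sq_nonneg (‖gradient L x0‖ - Llip * ‖z - x0‖),
      sq_nonneg (‖gradient L x0‖ * ‖z - x0‖),
      sq_nonneg (‖gradient L x0‖ + Llip * ‖z - x0‖)]
  have hsb : ∀ z : EuclideanSpace ℝ (Fin d),
      (C2 1 * (1 + ‖z‖)) ^ 2 ≤ cS * (1 + ‖z - x0‖ ^ 2) := by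
    intro z
    have htri : ‖z‖ ≤ ‖x0‖ + ‖z - x0‖ := by
      have := norm_add_le x0 (z - x0)
      simpa using this
    have hscal : (1 + ‖z‖) ^ 2 ≤ 2 * ((1 + ‖x0‖) ^ 2 + 1) * (1 + ‖z - x0‖ ^ 2) := by
      nlinarith only [htri, norm_nonneg z, norm_nonneg x0, norm_nonneg (z - x0),
        sq_nonneg (1 + ‖x0‖ - ‖z - x0‖), sq_nonneg (1 + ‖x0‖ + ‖z - x0‖),
        sq_nonneg (‖x0‖ + ‖z - x0‖ - ‖z‖)]
    calc (C2 1 * (1 + ‖z‖)) ^ 2 = (C2 1) ^ 2 * (1 + ‖z‖) ^ 2 := by ring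
      _ ≤ (C2 1) ^ 2 * (2 * ((1 + ‖x0‖) ^ 2 + 1) * (1 + ‖z - x0‖ ^ 2)) :=
          mul_le_mul_of_nonneg_left hscal (sq_nonneg _)
      _ = cS * (1 + ‖z - x0‖ ^ 2) := by rw [hcSdef]; ring
  have hxX : 1 + cG ≤ 2 * cX := by rw [hcXdef]; linarith
  have hdivA : lmin * ((lmax * cG + lmax ^ 2 * cS) / lmin) = lmax * cG + lmax ^ 2 * cS :=
    mul_div_cancel₀ _ hlmin.ne'
  have hA0 : ∫ ω, ‖m η 0 ω‖ ^ 2 ∂P ≤ cA := by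
    have h1 : Minit ≤ max Minit 0 := le_max_left _ _
    have h2 : 0 ≤ (lmax * cG + lmax ^ 2 * cS) / lmin := by positivity
    rw [hcAdef]
    linarith only [hm0b, h1, h2]
  have hAstep : lmax * cG + lmax ^ 2 * cS ≤ lmin * cA := by
    have h1 : 0 ≤ lmin * max Minit 0 := mul_nonneg hlmin.le (le_max_right _ _)
    have h2 : lmin * cA = lmin * max Minit 0
        + lmin * ((lmax * cG + lmax ^ 2 * cS) / lmin) := by
      rw [hcAdef]; ring
    rw [hdivA] at h2
    linarith only [h1, h2]
  have hCstep : lmax * cX + ηmax * cA ≤ lmin * cC := by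
    rw [hcCdef, mul_div_cancel₀ _ hlmin.ne']
  have h0step : 2 * ηmax * (cC + lmax * cX) + ηmax ^ 2 * cA ≤ c0 := le_of_eq hc0def.symm
  -- specialize the moment hypothesis at mm = 1
  have hv2int : ∀ j, Integrable (fun ω => ‖v η j ω‖ ^ 2) P := by
    intro j
    have := (hv3' j 1 le_rfl).1
    simpa using this
  have hv2bd : ∀ j, ∀ᵐ ω ∂P, (P[fun ω' => ‖v η j ω'‖ ^ 2|(F η) j]) ω
      ≤ (C2 1 * (1 + ‖x η j ω‖)) ^ 2 := by
    intro j
    have h := (hv3' j 1 le_rfl).2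
    have heq : (fun ω' => ‖v η j ω'‖ ^ (2 * 1)) = fun ω' => ‖v η j ω'‖ ^ 2 := by
      norm_num
    rw [heq] at h
    filter_upwards [h] with ω hω
    calc (P[fun ω' => ‖v η j ω'‖ ^ 2|(F η) j]) ω
        ≤ (C2 1 * (1 + ‖x η j ω‖)) ^ (2 * 1) := hω
      _ = (C2 1 * (1 + ‖x η j ω‖)) ^ 2 := by norm_num
  have key := sgdm_key (F η) L C2 α η ηmax lmin lmax (σf η) (ηk η) (βk η) x0
    (x η) (m η) (v η) cG cS cX cA cC c0 hη0 hη1 hα hα1 hηmax hlmin hlmaxpos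
    hlip.continuous hηkb hβkb hσ0 hσle hx00 hxmeas hmmeas hvmeas hv0' hv2int hv2bd
    hmrec' hxrec' hm0i hcG hcS hcX hcA hcC hc0 hgb hsb hxX hA0 hAstep hCstep h0step
  obtain ⟨hxL2, -, -, -, hB⟩ := key k
  -- gradient L² facts at time k
  have huL2 : MemLp (fun ω => x η k ω - x0) 2 P := hxL2.sub (memLp_const x0)
  have hu2int : Integrable (fun ω => ‖x η k ω - x0‖ ^ 2) P := sq_norm_integrable huL2
  have hBnn : (0:ℝ) ≤ ∫ ω, ‖x η k ω - x0‖ ^ 2 ∂P :=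
    integral_nonneg fun ω => by positivity
  have hGmeasAE : AEStronglyMeasurable (fun ω => gradient L (x η k ω)) P :=
    ((hlip.continuous.comp_stronglyMeasurable (hxmeas k)).mono ((F η).le k)).aestronglyMeasurable
  have hGdomint : Integrable (fun ω => cG * (1 + ‖x η k ω - x0‖ ^ 2)) P :=
    ((integrable_const (1:ℝ)).add hu2int).const_mul cG
  have hGL2 : MemLp (fun ω => gradient L (x η k ω)) 2 P := by
    refine (memLp_two_iff_integrable_sq_norm hGmeasAE).mpr ?_
    refine hGdomint.mono' ?_ ?_
    · exact (continuous_norm.pow 2).comp_aestronglyMeasurable hGmeasAE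
    · filter_upwards with ω
      rw [Real.norm_eq_abs, abs_of_nonneg (by positivity)]
      exact hgb (x η k ω)
  have hG2bd : ∫ ω, ‖gradient L (x η k ω)‖ ^ 2 ∂P
      ≤ cG * (1 + ∫ ω, ‖x η k ω - x0‖ ^ 2 ∂P) := by
    calc ∫ ω, ‖gradient L (x η k ω)‖ ^ 2 ∂P
        ≤ ∫ ω, cG * (1 + ‖x η k ω - x0‖ ^ 2) ∂P :=
          integral_mono (sq_norm_integrable hGL2) hGdomint fun ω => hgb (x η k ω)
      _ = cG * (1 + ∫ ω, ‖x η k ω - x0‖ ^ 2 ∂P) := by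
          rw [integral_const_mul, integral_add (integrable_const _) hu2int]
          simp
  -- exponential bound
  have hexp1 : (1 + c0 * η) ^ k ≤ Real.exp (c0 * T) := by
    have h1 : 1 + c0 * η ≤ Real.exp (c0 * η) := by
      have := Real.add_one_le_exp (c0 * η)
      linarith
    have h2 : (1 + c0 * η) ^ k ≤ Real.exp (c0 * η) ^ k :=
      pow_le_pow_left₀ (by positivity) h1 k
    have h3 : Real.exp (c0 * η) ^ k = Real.exp (c0 * η * k) := by
      rw [← Real.exp_nat_mul]
      ring_nf
    have h4 : c0 * η * k ≤ c0 * T := by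
      have hfl : ((⌊T / η⌋₊ : ℕ) : ℝ) ≤ T / η := Nat.floor_le (by positivity)
      have hkle : (k : ℝ) ≤ T / η := le_trans (Nat.cast_le.mpr hk) hfl
      have hηk : η * (k : ℝ) ≤ T := by
        rw [mul_comm]
        exact (le_div_iff₀ hη0).mp hkle
      have := mul_le_mul_of_nonneg_left hηk hc0
      calc c0 * η * (k : ℝ) = c0 * (η * (k : ℝ)) := by ring
        _ ≤ c0 * T := this
    calc (1 + c0 * η) ^ k ≤ Real.exp (c0 * η) ^ k := h2
      _ = Real.exp (c0 * η * k) := h3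
      _ ≤ Real.exp (c0 * T) := Real.exp_le_exp.mpr h4
  calc ∫ ω, ‖gradient L (x η k ω)‖ ^ 2 ∂P
      ≤ cG * (1 + ∫ ω, ‖x η k ω - x0‖ ^ 2 ∂P) := hG2bd
    _ ≤ cG * ((1 + c0 * η) ^ k) := by
        refine mul_le_mul_of_nonneg_left ?_ hcG
        linarith only [hB]
    _ ≤ cG * Real.exp (c0 * T) := mul_le_mul_of_nonneg_left hexp1 hcG
end
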